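/- arXiv:2508.01955 — 6 statements merged into one kernel-verified Lean document; each statement's English description precedes it below -/
import Mathlib

section
/- Let w ∈ C²([0,1]) satisfy -w'' + w^p = γ w on (0,1), w > 0 on (0,1), w(0) = w(1) = 0, with p > 1 and γ > 0. Then w is symmetric about x = 1/2, i.e., w(x) = w(1-x) for all x ∈ [0,1]. -/
/-!
Multiplying `w'' = f(w)`, `f(u) = u^p - γu`, by `w'` shows that the energy `w'^2/2 - F(w)`,
with `F' = f`, is conserved; since `w(0) = w(1)`, this gives `|w'(0)| = |w'(1)|`, and positivity
of `w` forces `w'(0) ≥ 0 ≥ w'(1)`, so `w'(1) = -w'(0)`. Then `x ↦ w(1 - x)` solves the same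
autonomous equation with the same Cauchy data at `0`, and as `f` is `C¹` for `p ≥ 1`,
uniqueness for the first-order system `(w, w')' = (w', f(w))` gives `w(1 - x) = w(x)`.
-/

open Set

lemma IsMinOn.sub_mul_nonneg_of_hasDerivWithinAt {f : ℝ → ℝ} {s : Set ℝ} {x y d : ℝ}
    (hmin : IsMinOn f s x) (hs : Convex ℝ s) (hx : x ∈ s) (hy : y ∈ s)
    (hd : HasDerivWithinAt f d s x) : 0 ≤ (y - x) * d := by
  have hcone := sub_mem_posTangentConeAt_of_segment_subset (hs.segment_subset hx hy)
  simpa [mul_comm] using hmin.localize.hasFDerivWithinAt_nonneg hd hcone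

lemma hasDerivWithinAt_comp_add_sub_Icc {g g' : ℝ → ℝ} {a b : ℝ}
    (hg : ∀ x ∈ Icc a b, HasDerivWithinAt g (g' x) (Icc a b) x) :
    ∀ x ∈ Icc a b, HasDerivWithinAt (fun x => g (a + b - x)) (-g' (a + b - x)) (Icc a b) x := by
  intro x hx
  have hmaps : MapsTo (fun x => a + b - x) (Icc a b) (Icc a b) := fun y hy =>
    ⟨by linarith [hy.2], by linarith [hy.1]⟩
  have := (hg _ (hmaps hx)).comp x ((hasDerivAt_id x).const_sub (a + b)).hasDerivWithinAt hmaps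
  simpa [Function.comp_def] using this

lemma hasDerivAt_logisticPotential {p : ℝ} (hp : 0 ≤ p) (γ u : ℝ) :
    HasDerivAt (fun u => u ^ (p + 1) / (p + 1) - γ * u ^ 2 / 2) (u ^ p - γ * u) u := by
  refine (((Real.hasDerivAt_rpow_const (Or.inr (by linarith))).div_const _).sub
    (((hasDerivAt_pow 2 u).const_mul γ).div_const 2)).congr_deriv ?_
  rw [add_sub_cancel_right]
  field_simp
  push_cast
  ring

structure SolvesSecondOrderOn (f w w' : ℝ → ℝ) (a b : ℝ) : Prop where
  hasDerivWithinAt : ∀ x ∈ Icc a b, HasDerivWithinAt w (w' x) (Icc a b) x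
  hasDerivWithinAt_deriv : ∀ x ∈ Icc a b, HasDerivWithinAt w' (f (w x)) (Icc a b) x

namespace SolvesSecondOrderOn

variable {f w w' : ℝ → ℝ} {a b : ℝ}

theorem _root_.ContDiffOn.solvesSecondOrderOn (hab : a < b) (hw : ContDiffOn ℝ 2 w (Icc a b))
    (hf : Continuous f) (heq : ∀ x ∈ Ioo a b, deriv (deriv w) x = f (w x)) :
    SolvesSecondOrderOn f w (derivWithin w (Icc a b)) a b := by
  have hI : UniqueDiffOn ℝ (Icc a b) := uniqueDiffOn_Icc hab
  have hw' : ContDiffOn ℝ 1 (derivWithin w (Icc a b)) (Icc a b) := hw.derivWithin hI (by norm_num)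
  have hw'' : ContinuousOn (derivWithin (derivWithin w (Icc a b)) (Icc a b)) (Icc a b) :=
    (hw'.derivWithin hI (m := 0) le_rfl).continuousOn
  have hinterior : EqOn (derivWithin (derivWithin w (Icc a b)) (Icc a b)) (fun x => f (w x))
      (Ioo a b) := fun x hx => by
    rw [derivWithin_of_mem_nhds (Icc_mem_nhds hx.1 hx.2)]
    refine (Filter.EventuallyEq.deriv_eq ?_).trans (heq x hx)
    filter_upwards [Ioo_mem_nhds hx.1 hx.2] with y hy
    exact derivWithin_of_mem_nhds (Icc_mem_nhds hy.1 hy.2)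
  have hclosed := hinterior.of_subset_closure hw'' (hf.comp_continuousOn hw.continuousOn)
    Ioo_subset_Icc_self (closure_Ioo hab.ne).ge
  refine ⟨fun x hx => (hw.differentiableOn two_ne_zero x hx).hasDerivWithinAt, fun x hx => ?_⟩
  have hderiv := (hw'.differentiableOn one_ne_zero x hx).hasDerivWithinAt
  rwa [hclosed hx] at hderiv

theorem energy_eq {F : ℝ → ℝ} (hF : ∀ u, HasDerivAt F (f u) u) (hab : a ≤ b)
    (hw : SolvesSecondOrderOn f w w' a b) :
    w' b ^ 2 / 2 - F (w b) = w' a ^ 2 / 2 - F (w a) := by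
  have hE : ∀ x ∈ Icc a b,
      HasDerivWithinAt (fun x => w' x ^ 2 / 2 - F (w x)) 0 (Icc a b) x := fun x hx => by
    refine ((((hw.hasDerivWithinAt_deriv x hx).fun_pow 2).div_const 2).fun_sub
      ((hF (w x)).comp_hasDerivWithinAt x (hw.hasDerivWithinAt x hx))).congr_deriv ?_
    push_cast
    ring
  exact constant_of_has_deriv_right_zero (fun x hx => (hE x hx).continuousWithinAt)
    (fun x hx => (hE x (Ico_subset_Icc_self hx)).mono_of_mem_nhdsWithin
      (Icc_mem_nhdsGE_of_mem hx)) b (right_mem_Icc.2 hab)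

theorem deriv_right_eq_neg_left {F : ℝ → ℝ} (hF : ∀ u, HasDerivAt F (f u) u) (hab : a < b)
    (hw : SolvesSecondOrderOn f w w' a b) (hmina : IsMinOn w (Icc a b) a)
    (hminb : IsMinOn w (Icc a b) b) (hwab : w a = w b) : w' b = -w' a := by
  have ha := left_mem_Icc.2 hab.le
  have hb := right_mem_Icc.2 hab.le
  have hw'a : 0 ≤ w' a := nonneg_of_mul_nonneg_right
    (hmina.sub_mul_nonneg_of_hasDerivWithinAt (convex_Icc a b) ha hb (hw.hasDerivWithinAt a ha))
    (sub_pos.2 hab)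
  have hw'b : w' b ≤ 0 := by
    have := hminb.sub_mul_nonneg_of_hasDerivWithinAt (convex_Icc a b) hb ha
      (hw.hasDerivWithinAt b hb)
    nlinarith
  have henergy := hw.energy_eq hF hab.le
  rw [hwab] at henergy
  nlinarith

theorem eqOn {v v' : ℝ → ℝ} (hf : ContDiff ℝ 1 f) (hw : SolvesSecondOrderOn f w w' a b)
    (hv : SolvesSecondOrderOn f v v' a b) (ha : w a = v a) (ha' : w' a = v' a) :
    EqOn w v (Icc a b) := by
  let field : ℝ × ℝ → ℝ × ℝ := fun q => (q.2, f q.1)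
  have hfield : ContDiff ℝ 1 field := contDiff_snd.prodMk (hf.comp contDiff_fst)
  have hW : ∀ x ∈ Icc a b,
      HasDerivWithinAt (fun x => (w x, w' x)) (field (w x, w' x)) (Icc a b) x :=
    fun x hx => (hw.hasDerivWithinAt x hx).prodMk (hw.hasDerivWithinAt_deriv x hx)
  have hV : ∀ x ∈ Icc a b,
      HasDerivWithinAt (fun x => (v x, v' x)) (field (v x, v' x)) (Icc a b) x :=
    fun x hx => (hv.hasDerivWithinAt x hx).prodMk (hv.hasDerivWithinAt_deriv x hx)
  have hWc : ContinuousOn (fun x => (w x, w' x)) (Icc a b) := fun x hx =>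
    (hW x hx).continuousWithinAt
  have hVc : ContinuousOn (fun x => (v x, v' x)) (Icc a b) := fun x hx =>
    (hV x hx).continuousWithinAt
  -- both trajectories stay in a compact set, on which the `C¹` field is Lipschitz
  set S := (fun x => (w x, w' x)) '' Icc a b ∪ (fun x => (v x, v' x)) '' Icc a b
  obtain ⟨K, hK⟩ :=
    (hfield.locallyLipschitz.locallyLipschitzOn (s := S)).exists_lipschitzOnWith_of_compact
    ((isCompact_Icc.image_of_continuousOn hWc).union (isCompact_Icc.image_of_continuousOn hVc))
  have hWV := ODE_solution_unique_of_mem_Icc_right (v := fun _ => field) (s := fun _ => S)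
    (fun _ _ => hK) hWc
    (fun x hx => (hW x (Ico_subset_Icc_self hx)).mono_of_mem_nhdsWithin (Icc_mem_nhdsGE_of_mem hx))
    (fun x hx => Or.inl (mem_image_of_mem _ (Ico_subset_Icc_self hx))) hVc
    (fun x hx => (hV x (Ico_subset_Icc_self hx)).mono_of_mem_nhdsWithin (Icc_mem_nhdsGE_of_mem hx))
    (fun x hx => Or.inr (mem_image_of_mem _ (Ico_subset_Icc_self hx))) (by rw [ha, ha'])
  exact fun x hx => congrArg Prod.fst (hWV hx)

theorem comp_add_sub (hw : SolvesSecondOrderOn f w w' a b) :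
    SolvesSecondOrderOn f (fun x => w (a + b - x)) (fun x => -w' (a + b - x)) a b :=
  ⟨hasDerivWithinAt_comp_add_sub_Icc hw.hasDerivWithinAt, fun x hx => by
    simpa using (hasDerivWithinAt_comp_add_sub_Icc hw.hasDerivWithinAt_deriv x hx).fun_neg⟩

theorem eqOn_comp_add_sub (hf : ContDiff ℝ 1 f) (hw : SolvesSecondOrderOn f w w' a b)
    (hwab : w a = w b) (hw'ab : w' b = -w' a) :
    EqOn (fun x => w (a + b - x)) w (Icc a b) :=
  hw.comp_add_sub.eqOn hf hw (by simp [hwab]) (by simp [hw'ab])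

end SolvesSecondOrderOn

theorem stmt_0_general (p γ : ℝ) (hp : 1 < p)
    (w : ℝ → ℝ) (hw : ContDiffOn ℝ 2 w (Icc 0 1))
    (heq : ∀ x ∈ Ioo (0:ℝ) 1, -(deriv (deriv w) x) + w x ^ p = γ * w x)
    (hpos : ∀ x ∈ Ioo (0:ℝ) 1, 0 < w x)
    (hb0 : w 0 = 0) (hb1 : w 1 = 0) :
    ∀ x ∈ Icc (0:ℝ) 1, w x = w (1 - x) := by
  set f : ℝ → ℝ := fun u => u ^ p - γ * u
  have hf : ContDiff ℝ 1 f :=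
    (Real.contDiff_rpow_const_of_le (by exact_mod_cast hp.le)).sub (contDiff_const.mul contDiff_id)
  have hsol := hw.solvesSecondOrderOn (f := f) zero_lt_one
    ((Real.continuous_rpow_const (by linarith)).sub (continuous_const_mul γ))
    (fun x hx => by linarith [heq x hx])
  have hnonneg : ∀ x ∈ Icc (0:ℝ) 1, 0 ≤ w x := by
    rintro x ⟨hx0, hx1⟩
    rcases hx0.eq_or_lt with rfl | hx0
    · exact hb0.ge
    rcases hx1.eq_or_lt with rfl | hx1
    · exact hb1.ge
    exact (hpos x ⟨hx0, hx1⟩).le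
  have hflux := hsol.deriv_right_eq_neg_left (hasDerivAt_logisticPotential (by linarith) γ)
    zero_lt_one (isMinOn_iff.2 fun x hx => hb0.trans_le (hnonneg x hx))
    (isMinOn_iff.2 fun x hx => hb1.trans_le (hnonneg x hx)) (hb0.trans hb1.symm)
  intro x hx
  simpa using (hsol.eqOn_comp_add_sub hf (hb0.trans hb1.symm) hflux hx).symm

/-- Symmetry about x = 1/2 of positive solutions of the logistic equation
    -w'' + w^p = γ w on (0,1) with Dirichlet boundary conditions. -/
theorem stmt_0 (p γ : ℝ) (hp : 1 < p) (hγ : 0 < γ)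
    (w : ℝ → ℝ) (hw : ContDiffOn ℝ 2 w (Icc 0 1))
    (heq : ∀ x ∈ Ioo (0:ℝ) 1, -(deriv (deriv w) x) + w x ^ p = γ * w x)
    (hpos : ∀ x ∈ Ioo (0:ℝ) 1, 0 < w x)
    (hb0 : w 0 = 0) (hb1 : w 1 = 0) :
    ∀ x ∈ Icc (0:ℝ) 1, w x = w (1 - x) :=
  stmt_0_general p γ hp w hw heq hpos hb0 hb1
end

section
/- Let w ∈ C²([0,1]) satisfy -w'' + w^p = γ w on (0,1), w > 0 on (0,1), w(0) = w(1) = 0, with p > 1, γ > 0. Then w'(x) > 0 for all x ∈ (0, 1/2), and consequently the maximum of w on [0,1] is attained at x = 1/2. -/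
/-!
The equation `w'' = w ^ p - γ w` is autonomous with a Lipschitz right-hand side on bounded sets
(as `p ≥ 1`), so by uniqueness for the initial value problem a solution is symmetric about each
of its critical points `c`. If `c ≠ 1/2`, the reflection about `c` carries the zero of `w` at the
nearer endpoint into `(0, 1)`, contradicting positivity. Hence the only critical point is `1/2`:
the interior maximum sits there, and `w'` does not vanish on `(0, 1/2)`, so it keeps the sign of
the slope `(w (1/2) - w 0) / (1/2) > 0`.
-/

open Set NNReal

theorem IsPreconnected.pos_of_ne_zero {X : Type*} [TopologicalSpace X] {s : Set X}
    (hs : IsPreconnected s) {g : X → ℝ} (hg : ContinuousOn g s) (h0 : ∀ x ∈ s, g x ≠ 0)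
    {a : X} (ha : a ∈ s) (hga : 0 < g a) {x : X} (hx : x ∈ s) : 0 < g x := by
  by_contra! hgx
  obtain ⟨y, hy, hgy⟩ := hs.intermediate_value hx ha hg ⟨hgx, hga.le⟩
  exact h0 y hy hgy

theorem eqOn_reflect_of_autonomous_second_order {f y y' : ℝ → ℝ} {K : ℝ≥0} {s : Set ℝ}
    {c r : ℝ} (hf : LipschitzOnWith K f s)
    (hy : ∀ t ∈ Ioo (c - r) (c + r), HasDerivAt y (y' t) t)
    (hy' : ∀ t ∈ Ioo (c - r) (c + r), HasDerivAt y' (f (y t)) t)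
    (hys : MapsTo y (Ioo (c - r) (c + r)) s) (hr : 0 < r) (hc : y' c = 0) :
    EqOn y (fun t => y (2 * c - t)) (Ioo (c - r) (c + r)) := by
  have hv : LipschitzOnWith (max 1 (K * 1)) (fun q : ℝ × ℝ => (q.2, f q.1)) (s ×ˢ univ) :=
    LipschitzWith.prod_snd.lipschitzOnWith.prodMk
      (hf.comp LipschitzWith.prod_fst.lipschitzOnWith fun q hq => hq.1)
  have hrefl : ∀ t ∈ Ioo (c - r) (c + r), 2 * c - t ∈ Ioo (c - r) (c + r) := fun t ht =>
    ⟨by linarith [ht.2], by linarith [ht.1]⟩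
  have hσ : ∀ t, HasDerivAt (fun t : ℝ => 2 * c - t) (-1) t := fun t => by
    simpa using (hasDerivAt_id t).const_sub (2 * c)
  have hrefl_sol : ∀ t ∈ Ioo (c - r) (c + r),
      HasDerivAt (fun t => (y (2 * c - t), -y' (2 * c - t)))
        (-y' (2 * c - t), f (y (2 * c - t))) t := fun t ht => by
    refine HasDerivAt.prodMk ?_ ?_
    · simpa [Function.comp_def] using (hy _ (hrefl t ht)).comp t (hσ t)
    · simpa [Function.comp_def, Pi.neg_def] using ((hy' _ (hrefl t ht)).comp t (hσ t)).neg
  -- `(y, y')` and its reflection both solve `q' = (q.2, f q.1)` and agree at `c` since `y' c = 0`.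
  have hphase := ODE_solution_unique_of_mem_Ioo (v := fun _ q => (q.2, f q.1))
    (s := fun _ => s ×ˢ univ) (fun _ _ => hv) (t₀ := c) ⟨by linarith, by linarith⟩
    (f := fun t => (y t, y' t)) (g := fun t => (y (2 * c - t), -y' (2 * c - t)))
    (fun t ht => ⟨(hy t ht).prodMk (hy' t ht), hys ht, trivial⟩)
    (fun t ht => ⟨hrefl_sol t ht, hys (hrefl t ht), trivial⟩)
    (by simp [show 2 * c - c = c by ring, hc])
  exact fun t ht => congrArg Prod.fst (hphase ht)

theorem eq_midpoint_of_autonomous_second_order {f w w' : ℝ → ℝ} {a b c : ℝ}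
    (hf : LocallyLipschitz f) (hw : ContinuousOn w (Icc a b))
    (hw₁ : ∀ t ∈ Ioo a b, HasDerivAt w (w' t) t)
    (hw₂ : ∀ t ∈ Ioo a b, HasDerivAt w' (f (w t)) t)
    (hne : ∀ x ∈ Ioo a b, w x ≠ 0) (ha : w a = 0) (hb : w b = 0)
    (hc : c ∈ Ioo a b) (hcrit : w' c = 0) : c = (a + b) / 2 := by
  set r := min (c - a) (b - c)
  have hr : 0 < r := lt_min (by linarith [hc.1]) (by linarith [hc.2])
  have hsub : Icc (c - r) (c + r) ⊆ Icc a b :=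
    Icc_subset_Icc (by linarith [min_le_left (c - a) (b - c)])
      (by linarith [min_le_right (c - a) (b - c)])
  have hsub' : Ioo (c - r) (c + r) ⊆ Ioo a b := fun t ht =>
    ⟨lt_of_le_of_lt (hsub ⟨le_rfl, by linarith⟩).1 ht.1,
      lt_of_lt_of_le ht.2 (hsub ⟨by linarith, le_rfl⟩).2⟩
  obtain ⟨C, hC⟩ := isCompact_Icc.exists_bound_of_continuousOn hw
  obtain ⟨K, hK⟩ := hf.locallyLipschitzOn.exists_lipschitzOnWith_of_compact
    (isCompact_closedBall (0 : ℝ) C)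
  have hsymm := eqOn_reflect_of_autonomous_second_order hK (fun t ht => hw₁ t (hsub' ht))
    (fun t ht => hw₂ t (hsub' ht))
    (fun t ht => mem_closedBall_zero_iff.2 (hC t (Ioo_subset_Icc_self (hsub' ht)))) hr hcrit
  have hrefl : MapsTo (fun t => 2 * c - t) (Icc (c - r) (c + r)) (Icc a b) := fun t ht =>
    hsub ⟨by linarith [ht.2], by linarith [ht.1]⟩
  replace hsymm := hsymm.of_subset_closure (hw.mono hsub)
    (hw.comp (continuousOn_const.sub continuousOn_id) hrefl) Ioo_subset_Icc_self
    (by rw [closure_Ioo (by linarith)])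
  have hends : w (c - r) = w (c + r) := by
    simpa [show 2 * c - (c - r) = c + r by ring] using hsymm ⟨le_rfl, by linarith⟩
  have hzero : ∀ x ∈ Icc a b, w x = 0 → x = a ∨ x = b := fun x hx hx0 => by
    by_contra! h
    exact hne x ⟨lt_of_le_of_ne hx.1 h.1.symm, lt_of_le_of_ne hx.2 h.2⟩ hx0
  have hleft : w (c - r) = 0 := by
    rcases min_cases (c - a) (b - c) with ⟨h, -⟩ | ⟨h, -⟩
    · rw [show r = c - a from h, sub_sub_cancel, ha]
    · rw [hends, show r = b - c from h, add_sub_cancel, hb]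
  rcases hzero (c - r) (hsub ⟨le_rfl, by linarith⟩) hleft with h₁ | h₁ <;>
  rcases hzero (c + r) (hsub ⟨by linarith, le_rfl⟩) (hends ▸ hleft) with h₂ | h₂ <;>
  linarith [hc.1, hc.2]

theorem stmt_1_general (p γ : ℝ) (hp : 1 < p)
    (w : ℝ → ℝ) (hw : ContDiffOn ℝ 2 w (Icc 0 1))
    (heq : ∀ x ∈ Ioo (0:ℝ) 1, -(deriv (deriv w) x) + w x ^ p = γ * w x)
    (hpos : ∀ x ∈ Ioo (0:ℝ) 1, 0 < w x)
    (hb0 : w 0 = 0) (hb1 : w 1 = 0) :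
    (∀ x ∈ Ioo (0:ℝ) (1/2), 0 < deriv w x) ∧
    (∀ x ∈ Icc (0:ℝ) 1, w x ≤ w (1/2)) := by
  have hf : LocallyLipschitz fun u : ℝ => u ^ p - γ * u :=
    ((Real.contDiff_rpow_const_of_le (n := 1) (by exact_mod_cast hp.le)).sub
      (contDiff_const.mul contDiff_id)).locallyLipschitz
  have hwc : ContinuousOn w (Icc 0 1) := hw.continuousOn
  have hw' : ContDiffOn ℝ 1 (deriv w) (Ioo 0 1) :=
    (hw.mono Ioo_subset_Icc_self).deriv_of_isOpen isOpen_Ioo (by norm_num)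
  have hd₁ : ∀ t ∈ Ioo (0:ℝ) 1, HasDerivAt w (deriv w t) t := fun t ht =>
    ((hw.contDiffAt (Icc_mem_nhds ht.1 ht.2)).differentiableAt (by norm_num)).hasDerivAt
  have hd₂ : ∀ t ∈ Ioo (0:ℝ) 1, HasDerivAt (deriv w) (w t ^ p - γ * w t) t := fun t ht => by
    rw [show w t ^ p - γ * w t = deriv (deriv w) t by linarith [heq t ht]]
    exact ((hw'.contDiffAt (isOpen_Ioo.mem_nhds ht)).differentiableAt one_ne_zero).hasDerivAt
  have hcrit : ∀ c ∈ Ioo (0:ℝ) 1, deriv w c = 0 → c = 1 / 2 := fun c hc hc0 => by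
    simpa using eq_midpoint_of_autonomous_second_order hf hwc hd₁ hd₂
      (fun x hx => (hpos x hx).ne') hb0 hb1 hc hc0
  have hhalf : (1 / 2 : ℝ) ∈ Ioo 0 1 := by norm_num
  refine ⟨fun x hx => ?_, ?_⟩
  · have hsub : Ioo (0:ℝ) (1 / 2) ⊆ Ioo 0 1 := Ioo_subset_Ioo_right (by norm_num)
    obtain ⟨ξ, hξ, hslope⟩ := exists_hasDerivAt_eq_slope w (deriv w) hhalf.1
      (hwc.mono (Icc_subset_Icc_right hhalf.2.le)) fun t ht => hd₁ t (hsub ht)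
    refine isPreconnected_Ioo.pos_of_ne_zero (hw'.continuousOn.mono hsub)
      (fun y hy hy0 => hy.2.ne (hcrit y (hsub hy) hy0)) hξ ?_ hx
    rw [hslope, hb0, sub_zero, sub_zero]
    exact div_pos (by linarith [hpos _ hhalf]) hhalf.1
  · obtain ⟨c, hc, hmax⟩ := isCompact_Icc.exists_isMaxOn (nonempty_Icc.2 zero_le_one) hwc
    have hc' : c ∈ Ioo (0:ℝ) 1 := by
      have hwc_pos := lt_of_lt_of_le (hpos _ hhalf) (hmax (Ioo_subset_Icc_self hhalf))
      refine ⟨lt_of_le_of_ne hc.1 ?_, lt_of_le_of_ne hc.2 ?_⟩ <;> rintro rfl <;> linarith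
    rw [← hcrit c hc' (hmax.isLocalMax (Icc_mem_nhds hc'.1 hc'.2)).deriv_eq_zero]
    exact hmax

/-- Positive logistic solutions are strictly increasing on (0,1/2) and attain their
    maximum on [0,1] at x = 1/2. -/
theorem stmt_1 (p γ : ℝ) (hp : 1 < p) (hγ : 0 < γ)
    (w : ℝ → ℝ) (hw : ContDiffOn ℝ 2 w (Icc 0 1))
    (heq : ∀ x ∈ Ioo (0:ℝ) 1, -(deriv (deriv w) x) + w x ^ p = γ * w x)
    (hpos : ∀ x ∈ Ioo (0:ℝ) 1, 0 < w x)
    (hb0 : w 0 = 0) (hb1 : w 1 = 0) :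
    (∀ x ∈ Ioo (0:ℝ) (1/2), 0 < deriv w x) ∧
    (∀ x ∈ Icc (0:ℝ) 1, w x ≤ w (1/2)) :=
  stmt_1_general p γ hp w hw heq hpos hb0 hb1
end

section
/- Let w ∈ C²([0,1]) satisfy -w'' + w^p = γ w on (0,1), w > 0 on (0,1), w(0) = w(1) = 0, with p > 1, γ > 0, q > 0, k = max w. Then the q-th power of the L^q norm satisfies ∫₀¹ w(x)^q dx = (2 k^q / √γ) ∫₀¹ s^q / sqrt( (1 - s²) - (2/(p+1)) (k^{p-1}/γ)(1 - s^{p+1}) ) ds. -/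
/-!
Multiplying the equation by `w'` gives the energy identity `w'² = γ k² R(w / k)`, where `R` is the
radicand of the time map. Since `w / k` sweeps out `(0, 1)`, `R ≥ 0` there, which forces
`r = k ^ (p - 1) / γ ≤ 1`. If `r = 1`, then `R` vanishes to second order at `1`, so
`|w'| ≤ C (k - w)` and Grönwall gives `w ≡ k`, which is absurd. Hence `R > 0` on `[0, 1)`, so `w'`
vanishes only where `w = k`; this makes `1 / 2` the only maximum point and `w` increasing on
`(0, 1 / 2)`. Substituting `w = k s` there gives half the integral, and the reflection
`x ↦ 1 - x`, which preserves the hypotheses, gives the other half.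
-/

open Set Filter Topology MeasureTheory

/-- The paper's radicand with `r = k ^ (p - 1) / γ`. -/
noncomputable def timeMapRadicand (p r s : ℝ) : ℝ :=
  (1 - s ^ 2) - (2 / (p + 1)) * r * (1 - s ^ (p + 1))

section TimeMapRadicand

variable {p r : ℝ}

theorem hasDerivAt_timeMapRadicand (hp : 0 ≤ p) (s : ℝ) :
    HasDerivAt (timeMapRadicand p r) (-2 * s + 2 * r * s ^ p) s := by
  have hpow : HasDerivAt (fun s : ℝ => s ^ (p + 1)) ((p + 1) * s ^ p) s := by
    simpa using Real.hasDerivAt_rpow_const (x := s) (p := p + 1) (Or.inr (by linarith))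
  have hp1 : p + 1 ≠ 0 := by linarith
  refine (((hasDerivAt_pow 2 s).const_sub 1).sub
    ((hpow.const_sub 1).const_mul (2 / (p + 1) * r))).congr_deriv ?_
  field_simp
  ring

theorem continuous_timeMapRadicand (hp : 0 ≤ p) : Continuous (timeMapRadicand p r) :=
  continuous_iff_continuousAt.2 fun s => (hasDerivAt_timeMapRadicand hp s).continuousAt

@[simp]
theorem timeMapRadicand_one : timeMapRadicand p r 1 = 0 := by
  simp [timeMapRadicand]

theorem le_one_of_timeMapRadicand_nonneg (hp : 0 ≤ p)
    (h : ∀ s ∈ Ioo 0 1, 0 ≤ timeMapRadicand p r s) : r ≤ 1 := by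
  have hmin : IsLocalMinOn (timeMapRadicand p r) (Ioo 0 1) 1 :=
    IsMinOn.localize fun s hs => by simpa using h s hs
  have hcone : (1 / 2 - 1 : ℝ) ∈ posTangentConeAt (Ioo 0 1) 1 :=
    sub_mem_posTangentConeAt_of_openSegment_subset <| by
      rw [openSegment_symm, openSegment_eq_Ioo (by norm_num)]
      exact Ioo_subset_Ioo_left (by norm_num)
  have := hmin.hasFDerivWithinAt_nonneg
    (hasDerivAt_timeMapRadicand hp 1).hasDerivWithinAt.hasFDerivWithinAt hcone
  norm_num at this
  linarith

theorem timeMapRadicand_pos (hp : 1 < p) (hr : r ≤ 1) {s : ℝ} (hs : s ∈ Ico 0 1) :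
    0 < timeMapRadicand p r s := by
  have hanti : StrictAntiOn (timeMapRadicand p r) (Icc 0 1) := by
    refine strictAntiOn_of_hasDerivWithinAt_neg (convex_Icc 0 1)
      (continuous_timeMapRadicand (by linarith)).continuousOn
      (fun x _ => (hasDerivAt_timeMapRadicand (by linarith) x).hasDerivWithinAt) ?_
    rw [interior_Icc]
    intro x hx
    have hxp : x ^ p < x := by
      simpa using Real.rpow_lt_rpow_of_exponent_gt hx.1 hx.2 hp
    nlinarith [Real.rpow_pos_of_pos hx.1 p]
  simpa using hanti ⟨hs.1, hs.2.le⟩ ⟨zero_le_one, le_rfl⟩ hs.2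

theorem timeMapRadicand_ratio_one_le_sq (hp : 1 ≤ p) {s : ℝ} (hs : s ∈ Icc 0 1) :
    timeMapRadicand p 1 s ≤ (p - 1) * (1 - s) ^ 2 := by
  have hanti :
      AntitoneOn (fun s => (p - 1) * (1 - s) ^ 2 - timeMapRadicand p 1 s) (Icc 0 1) := by
    refine antitoneOn_of_hasDerivWithinAt_nonpos (convex_Icc 0 1)
      ((continuous_const.mul ((continuous_const.sub continuous_id).pow 2)).sub
        (continuous_timeMapRadicand (by linarith))).continuousOn
      (fun x _ => (((((hasDerivAt_id x).const_sub 1).pow 2).const_mul (p - 1)).sub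
        (hasDerivAt_timeMapRadicand (by linarith) x)).hasDerivWithinAt) ?_
    rw [interior_Icc]
    intro x hx
    have bernoulli := one_add_mul_self_le_rpow_one_add (by linarith [hx.1] : -1 ≤ x - 1) hp
    simp only [add_sub_cancel] at bernoulli
    simp only [Nat.cast_ofNat, id_eq, Nat.add_one_sub_one, pow_one]
    nlinarith
  simpa using hanti hs ⟨zero_le_one, le_rfl⟩ hs.2

end TimeMapRadicand

theorem setIntegral_image_div_sqrt {φ φ' R u : ℝ → ℝ} {s : Set ℝ} {c : ℝ}
    (hs : MeasurableSet s) (hφ : ∀ x ∈ s, HasDerivWithinAt φ (φ' x) s x) (hinj : InjOn φ s)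
    (hc : 0 < c) (hφ' : ∀ x ∈ s, φ' x ^ 2 = c ^ 2 * R (φ x))
    (hne : ∀ x ∈ s, φ' x ≠ 0) :
    ∫ y in φ '' s, u y / √(R y) = c * ∫ x in s, u (φ x) := by
  rw [integral_image_eq_integral_abs_deriv_smul hs hφ hinj, ← integral_const_mul]
  refine setIntegral_congr_fun hs fun x hx => ?_
  have hR : R (φ x) = (φ' x / c) ^ 2 := by
    rw [div_pow, hφ' x hx]
    field_simp
  have habs : |φ' x| ≠ 0 := abs_ne_zero.2 (hne x hx)
  simp only [smul_eq_mul, hR, Real.sqrt_sq_eq_abs, abs_div, abs_of_pos hc]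
  field_simp

theorem sq_deriv_sub_eq_of_hasDerivAt_deriv {w f P : ℝ → ℝ} {s : Set ℝ} (hs : IsOpen s)
    (hs' : IsPreconnected s) (hw : ∀ x ∈ s, DifferentiableAt ℝ w x)
    (hw' : ∀ x ∈ s, HasDerivAt (deriv w) (f (w x)) x)
    (hP : ∀ x ∈ s, HasDerivAt P (f (w x)) (w x)) {x y : ℝ} (hx : x ∈ s) (hy : y ∈ s) :
    deriv w x ^ 2 - 2 * P (w x) = deriv w y ^ 2 - 2 * P (w y) := by
  have hE : ∀ x ∈ s, HasDerivAt (fun x => deriv w x ^ 2 - 2 * P (w x)) 0 x := fun x hx =>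
    (((hw' x hx).pow 2).sub (((hP x hx).comp x (hw x hx).hasDerivAt).const_mul 2)).congr_deriv
      (by simp only [Nat.cast_ofNat, Nat.add_one_sub_one, pow_one]; ring)
  exact hs.is_const_of_deriv_eq_zero hs'
    (fun x hx => (hE x hx).differentiableAt.differentiableWithinAt)
    (fun x hx => (hE x hx).deriv) hx hy

theorem deriv_deriv_eq_zero_of_eqOn {f : ℝ → ℝ} {a b c x : ℝ}
    (h : EqOn f (fun _ => c) (Ioo a b)) (hx : x ∈ Ioo a b) : deriv (deriv f) x = 0 := by
  have hderiv : deriv f =ᶠ[𝓝 x] fun _ => 0 := by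
    filter_upwards [isOpen_Ioo.mem_nhds hx] with y hy
    rw [(h.eventuallyEq_of_mem (isOpen_Ioo.mem_nhds hy)).deriv_eq, deriv_const]
  rw [hderiv.deriv_eq, deriv_const]

theorem mul_timeMapRadicand_div {p γ k t : ℝ} (hγ : γ ≠ 0) (hk : 0 < k) (ht : 0 ≤ t) :
    γ * k ^ 2 * timeMapRadicand p (k ^ (p - 1) / γ) (t / k)
      = γ * (k ^ 2 - t ^ 2) - 2 / (p + 1) * (k ^ (p + 1) - t ^ (p + 1)) := by
  have hk2 : k ^ (p - 1) * k ^ 2 = k ^ (p + 1) := by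
    rw [← Real.rpow_natCast, ← Real.rpow_add hk]
    congr 1
    push_cast
    ring
  unfold timeMapRadicand
  rw [Real.div_rpow ht hk.le, ← hk2]
  field_simp

structure IsLogisticSolution (p γ : ℝ) (w : ℝ → ℝ) : Prop where
  contDiffOn : ContDiffOn ℝ 2 w (Icc 0 1)
  ode : ∀ x ∈ Ioo (0:ℝ) 1, -(deriv (deriv w) x) + w x ^ p = γ * w x
  pos : ∀ x ∈ Ioo (0:ℝ) 1, 0 < w x
  apply_zero : w 0 = 0
  apply_one : w 1 = 0
  isMaxOn_half : IsMaxOn w (Icc 0 1) (1 / 2)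

namespace IsLogisticSolution

variable {p γ : ℝ} {w : ℝ → ℝ} {x : ℝ}

theorem continuousOn (hw : IsLogisticSolution p γ w) : ContinuousOn w (Icc 0 1) :=
  hw.contDiffOn.continuousOn

theorem le_half (hw : IsLogisticSolution p γ w) (hx : x ∈ Icc 0 1) : w x ≤ w (1 / 2) :=
  hw.isMaxOn_half hx

theorem half_pos (hw : IsLogisticSolution p γ w) : 0 < w (1 / 2) :=
  hw.pos _ ⟨by norm_num, by norm_num⟩

theorem differentiableAt (hw : IsLogisticSolution p γ w) (hx : x ∈ Ioo 0 1) :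
    DifferentiableAt ℝ w x :=
  (hw.contDiffOn.contDiffAt (Icc_mem_nhds hx.1 hx.2)).differentiableAt (by norm_num)

theorem hasDerivAt_deriv (hw : IsLogisticSolution p γ w) (hx : x ∈ Ioo 0 1) :
    HasDerivAt (deriv w) (w x ^ p - γ * w x) x := by
  have hC1 : ContDiffOn ℝ 1 (deriv w) (Ioo 0 1) :=
    (hw.contDiffOn.mono Ioo_subset_Icc_self).deriv_of_isOpen isOpen_Ioo (by norm_num)
  have hd := ((hC1.contDiffAt (isOpen_Ioo.mem_nhds hx)).differentiableAt one_ne_zero).hasDerivAt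
  rwa [show deriv (deriv w) x = w x ^ p - γ * w x by linarith [hw.ode x hx]] at hd

theorem deriv_half (hw : IsLogisticSolution p γ w) : deriv w (1 / 2) = 0 :=
  IsLocalMax.deriv_eq_zero <| mem_of_superset (Icc_mem_nhds (by norm_num) (by norm_num))
    fun _ hx => hw.le_half hx

theorem sq_deriv (hw : IsLogisticSolution p γ w) (hp : 1 < p) (hγ : 0 < γ) (hx : x ∈ Ioo 0 1) :
    deriv w x ^ 2
      = γ * w (1 / 2) ^ 2 * timeMapRadicand p (w (1 / 2) ^ (p - 1) / γ) (w x / w (1 / 2)) := by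
  have hp1 : p + 1 ≠ 0 := by linarith
  have hP : ∀ y ∈ Ioo (0:ℝ) 1, HasDerivAt (fun t => t ^ (p + 1) / (p + 1) - γ * t ^ 2 / 2)
      (w y ^ p - γ * w y) (w y) := by
    intro y _
    refine ((((Real.hasDerivAt_rpow_const (Or.inr (by linarith))).div_const (p + 1))).sub
      (((hasDerivAt_pow 2 (w y)).const_mul γ).div_const 2)).congr_deriv ?_
    rw [add_sub_cancel_right]
    field_simp
    ring
  have henergy := sq_deriv_sub_eq_of_hasDerivAt_deriv (f := fun t => t ^ p - γ * t)
    isOpen_Ioo isPreconnected_Ioo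
    (fun y hy => hw.differentiableAt hy) (fun y hy => hw.hasDerivAt_deriv hy) hP hx
    (⟨by norm_num, by norm_num⟩ : (1 / 2 : ℝ) ∈ Ioo 0 1)
  rw [mul_timeMapRadicand_div hγ.ne' hw.half_pos (hw.pos x hx).le]
  rw [hw.deriv_half] at henergy
  field_simp at henergy ⊢
  linarith

theorem timeMapRadicand_nonneg (hw : IsLogisticSolution p γ w) (hp : 1 < p) (hγ : 0 < γ)
    (hx : x ∈ Ioo 0 1) :
    0 ≤ timeMapRadicand p (w (1 / 2) ^ (p - 1) / γ) (w x / w (1 / 2)) := by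
  have hk := hw.half_pos
  have h := hw.sq_deriv hp hγ hx
  exact (mul_nonneg_iff_of_pos_left (by positivity)).1 (h ▸ sq_nonneg _)

theorem ratio_le_one (hw : IsLogisticSolution p γ w) (hp : 1 < p) (hγ : 0 < γ) :
    w (1 / 2) ^ (p - 1) / γ ≤ 1 := by
  refine le_one_of_timeMapRadicand_nonneg (p := p) (by linarith) fun s hs => ?_
  have hk := hw.half_pos
  have hcont : ContinuousOn (fun x => w x / w (1 / 2)) (Icc 0 (1 / 2)) :=
    (hw.continuousOn.mono (Icc_subset_Icc le_rfl (by norm_num))).div_const _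
  have hs' : s ∈ Ioo (w 0 / w (1 / 2)) (w (1 / 2) / w (1 / 2)) := by
    rwa [hw.apply_zero, zero_div, div_self hk.ne']
  obtain ⟨x, hx, rfl⟩ := intermediate_value_Ioo (by norm_num) hcont hs'
  exact hw.timeMapRadicand_nonneg hp hγ ⟨hx.1, by linarith [hx.2]⟩

theorem ratio_ne_one (hw : IsLogisticSolution p γ w) (hp : 1 < p) (hγ : 0 < γ) :
    w (1 / 2) ^ (p - 1) / γ ≠ 1 := by
  intro hr
  have hk := hw.half_pos
  have hbound : ∀ x ∈ Ico (1 / 2 : ℝ) 1,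
      ‖-deriv w x‖ ≤ √(γ * (p - 1)) * ‖w (1 / 2) - w x‖ := by
    intro x hx
    have hx' : x ∈ Ioo 0 1 := ⟨by linarith [hx.1], hx.2⟩
    have hs : w x / w (1 / 2) ∈ Icc 0 1 :=
      ⟨div_nonneg (hw.pos x hx').le hk.le,
        (div_le_one hk).2 (hw.le_half (Ioo_subset_Icc_self hx'))⟩
    have hsq : deriv w x ^ 2 ≤ (√(γ * (p - 1)) * (w (1 / 2) - w x)) ^ 2 := by
      rw [hw.sq_deriv hp hγ hx', hr, mul_pow, Real.sq_sqrt (by nlinarith)]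
      calc γ * w (1 / 2) ^ 2 * timeMapRadicand p 1 (w x / w (1 / 2))
          ≤ γ * w (1 / 2) ^ 2 * ((p - 1) * (1 - w x / w (1 / 2)) ^ 2) :=
            mul_le_mul_of_nonneg_left (timeMapRadicand_ratio_one_le_sq hp.le hs) (by positivity)
        _ = γ * (p - 1) * (w (1 / 2) - w x) ^ 2 := by field_simp
    simpa [Real.norm_eq_abs, abs_mul, abs_of_nonneg (Real.sqrt_nonneg _)] using sq_le_sq.1 hsq
  have hzero := eq_zero_of_abs_deriv_le_mul_abs_self_of_eq_zero_right
    (f := fun x => w (1 / 2) - w x) (a := 1 / 2) (b := 1)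
    (continuousOn_const.sub (hw.continuousOn.mono (Icc_subset_Icc (by norm_num) le_rfl)))
    (fun x hx => ((hw.differentiableAt ⟨by linarith [hx.1], hx.2⟩).hasDerivAt.const_sub _)
      |>.hasDerivWithinAt)
    (sub_self _) hbound 1 ⟨by norm_num, le_rfl⟩
  simp only [hw.apply_one, sub_zero] at hzero
  exact hk.ne' hzero

theorem ratio_lt_one (hw : IsLogisticSolution p γ w) (hp : 1 < p) (hγ : 0 < γ) :
    w (1 / 2) ^ (p - 1) / γ < 1 :=
  (hw.ratio_le_one hp hγ).lt_of_ne (hw.ratio_ne_one hp hγ)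

theorem deriv_ne_zero (hw : IsLogisticSolution p γ w) (hp : 1 < p) (hγ : 0 < γ)
    (hx : x ∈ Ioo 0 1) (hlt : w x < w (1 / 2)) : deriv w x ≠ 0 := by
  have hk := hw.half_pos
  have hR := timeMapRadicand_pos hp (hw.ratio_lt_one hp hγ).le
    ⟨div_nonneg (hw.pos x hx).le hk.le, (div_lt_one hk).2 hlt⟩
  have h := hw.sq_deriv hp hγ hx
  intro h0
  rw [h0] at h
  have : 0 < γ * w (1 / 2) ^ 2 *
      timeMapRadicand p (w (1 / 2) ^ (p - 1) / γ) (w x / w (1 / 2)) := by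
    positivity
  linarith

/-- A second maximum point `x < 1 / 2` is impossible: either `w` dips below `k` on `[x, 1/2]`,
producing a critical point below the maximum, or `w ≡ k` there and the equation forces
`k ^ (p - 1) = γ`. -/
theorem eq_half_of_eq (hw : IsLogisticSolution p γ w) (hp : 1 < p) (hγ : 0 < γ)
    (hx : x ∈ Icc 0 (1 / 2)) (hwx : w x = w (1 / 2)) : x = 1 / 2 := by
  have hk := hw.half_pos
  by_contra hne
  have hxlt : x < 1 / 2 := lt_of_le_of_ne hx.2 hne
  have hx0 : 0 < x := lt_of_le_of_ne hx.1 fun h => by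
    rw [← h, hw.apply_zero] at hwx; exact hk.ne hwx
  have hsub : Icc x (1 / 2) ⊆ Icc 0 1 := Icc_subset_Icc hx.1 (by norm_num)
  obtain ⟨z, hz, hzmin⟩ := isCompact_Icc.exists_isMinOn (nonempty_Icc.2 hxlt.le)
    (hw.continuousOn.mono hsub)
  rcases (hw.le_half (hsub hz)).lt_or_eq with hzlt | hzeq
  · have hzI : z ∈ Ioo x (1 / 2) :=
      ⟨lt_of_le_of_ne hz.1 (by rintro rfl; exact hzlt.ne hwx),
        lt_of_le_of_ne hz.2 (by rintro rfl; exact hzlt.ne rfl)⟩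
    exact hw.deriv_ne_zero hp hγ ⟨hx0.trans hzI.1, by linarith [hzI.2]⟩ hzlt
      (hzmin.isLocalMin (Icc_mem_nhds hzI.1 hzI.2)).deriv_eq_zero
  · have hconst : EqOn w (fun _ => w (1 / 2)) (Ioo x (1 / 2)) := fun y hy =>
      le_antisymm (hw.le_half (hsub (Ioo_subset_Icc_self hy)))
        (hzeq ▸ hzmin (Ioo_subset_Icc_self hy))
    have hm : (x + 1 / 2) / 2 ∈ Ioo x (1 / 2) := ⟨by linarith, by linarith⟩
    have hode := hw.ode ((x + 1 / 2) / 2) ⟨by linarith, by linarith⟩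
    rw [deriv_deriv_eq_zero_of_eqOn hconst hm, hconst hm, neg_zero, zero_add] at hode
    refine hw.ratio_ne_one hp hγ ?_
    rw [Real.rpow_sub_one hk.ne', hode]
    field_simp

theorem lt_half (hw : IsLogisticSolution p γ w) (hp : 1 < p) (hγ : 0 < γ)
    (hx : x ∈ Ico 0 (1 / 2)) : w x < w (1 / 2) :=
  (hw.le_half ⟨hx.1, by linarith [hx.2]⟩).lt_of_ne fun h =>
    hx.2.ne (hw.eq_half_of_eq hp hγ (Ico_subset_Icc_self hx) h)

/-- Darboux: `w'` does not vanish on `(0, 1/2)`, so it has a constant sign there, and the mean value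
theorem shows that this sign is positive. -/
theorem deriv_pos (hw : IsLogisticSolution p γ w) (hp : 1 < p) (hγ : 0 < γ)
    (hx : x ∈ Ioo 0 (1 / 2)) : 0 < deriv w x := by
  have hI : Ioo (0:ℝ) (1 / 2) ⊆ Ioo 0 1 := Ioo_subset_Ioo_right (by norm_num)
  have hsign := hasDerivWithinAt_forall_lt_or_forall_gt_of_forall_ne (convex_Ioo 0 (1 / 2))
    (fun y hy => (hw.differentiableAt (hI hy)).hasDerivAt.hasDerivWithinAt)
    (fun y hy => hw.deriv_ne_zero hp hγ (hI hy) (hw.lt_half hp hγ (Ioo_subset_Ico_self hy)))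
  obtain ⟨c, hc, hslope⟩ := exists_deriv_eq_slope w (by norm_num : (0:ℝ) < 1 / 2)
    (hw.continuousOn.mono (Icc_subset_Icc le_rfl (by norm_num)))
    (fun y hy => (hw.differentiableAt (hI hy)).differentiableWithinAt)
  have hc_pos : 0 < deriv w c := by
    rw [hslope, hw.apply_zero]
    have := hw.half_pos
    positivity
  exact hsign.resolve_left (fun h => (h c hc).not_gt hc_pos) x hx

theorem strictMonoOn (hw : IsLogisticSolution p γ w) (hp : 1 < p) (hγ : 0 < γ) :
    StrictMonoOn w (Icc 0 (1 / 2)) :=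
  strictMonoOn_of_deriv_pos (convex_Icc 0 (1 / 2))
    (hw.continuousOn.mono (Icc_subset_Icc le_rfl (by norm_num)))
    (by simpa only [interior_Icc] using fun x hx => hw.deriv_pos hp hγ hx)

theorem image_div_half (hw : IsLogisticSolution p γ w) (hp : 1 < p) (hγ : 0 < γ) :
    (fun x => w x / w (1 / 2)) '' Ioo 0 (1 / 2) = Ioo 0 1 := by
  have hk := hw.half_pos
  refine Subset.antisymm ?_ fun s hs => ?_
  · rintro _ ⟨x, hx, rfl⟩
    exact ⟨div_pos (hw.pos x ⟨hx.1, by linarith [hx.2]⟩) hk,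
      (div_lt_one hk).2 (hw.lt_half hp hγ (Ioo_subset_Ico_self hx))⟩
  · have hs' : s ∈ Ioo (w 0 / w (1 / 2)) (w (1 / 2) / w (1 / 2)) := by
      rwa [hw.apply_zero, zero_div, div_self hk.ne']
    exact intermediate_value_Ioo (by norm_num)
      ((hw.continuousOn.mono (Icc_subset_Icc le_rfl (by norm_num))).div_const _) hs'

theorem integral_half (hw : IsLogisticSolution p γ w) (hp : 1 < p) (hγ : 0 < γ) (q : ℝ) :
    ∫ x in (0:ℝ)..1 / 2, w x ^ q
      = w (1 / 2) ^ q / √γ *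
        ∫ s in (0:ℝ)..1, s ^ q / √(timeMapRadicand p (w (1 / 2) ^ (p - 1) / γ) s) := by
  have hk := hw.half_pos
  have hI : Ioo (0:ℝ) (1 / 2) ⊆ Ioo 0 1 := Ioo_subset_Ioo_right (by norm_num)
  have hsubst := setIntegral_image_div_sqrt (u := fun s => s ^ q) (c := √γ)
    (φ := fun x => w x / w (1 / 2)) (φ' := fun x => deriv w x / w (1 / 2))
    measurableSet_Ioo
    (fun x hx => ((hw.differentiableAt (hI hx)).hasDerivAt.div_const _).hasDerivWithinAt)
    (fun x hx y hy h => (hw.strictMonoOn hp hγ).injOn (Ioo_subset_Icc_self hx)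
      (Ioo_subset_Icc_self hy) ((div_left_inj' hk.ne').1 h))
    (Real.sqrt_pos.2 hγ)
    (fun x hx => by
      rw [div_pow, hw.sq_deriv hp hγ (hI hx), Real.sq_sqrt hγ.le]
      field_simp)
    (fun x hx => div_ne_zero (hw.deriv_pos hp hγ hx).ne' hk.ne')
  rw [hw.image_div_half hp hγ] at hsubst
  have hdiv : ∫ x in Ioo (0:ℝ) (1 / 2), (w x / w (1 / 2)) ^ q
      = (∫ x in Ioo (0:ℝ) (1 / 2), w x ^ q) / w (1 / 2) ^ q := by
    rw [← integral_div]
    exact setIntegral_congr_fun measurableSet_Ioo fun x hx =>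
      Real.div_rpow (hw.pos x (hI hx)).le hk.le q
  rw [intervalIntegral.integral_of_le (by norm_num), intervalIntegral.integral_of_le zero_le_one,
    integral_Ioc_eq_integral_Ioo, integral_Ioc_eq_integral_Ioo, hsubst, hdiv]
  have : 0 < w (1 / 2) ^ q := Real.rpow_pos_of_pos hk q
  have : 0 < √γ := Real.sqrt_pos.2 hγ
  field_simp

theorem reflect (hw : IsLogisticSolution p γ w) :
    IsLogisticSolution p γ (fun x => w (1 - x)) where
  contDiffOn := hw.contDiffOn.comp (contDiff_const.sub contDiff_id).contDiffOn
    fun x hx => ⟨by linarith [hx.2], by linarith [hx.1]⟩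
  ode x hx := by
    have hderiv : deriv (fun x => w (1 - x)) = fun x => -deriv w (1 - x) :=
      funext fun y => deriv_comp_const_sub w 1 y
    rw [hderiv, deriv.fun_neg, deriv_comp_const_sub, neg_neg]
    exact hw.ode (1 - x) ⟨by linarith [hx.2], by linarith [hx.1]⟩
  pos x hx := hw.pos (1 - x) ⟨by linarith [hx.2], by linarith [hx.1]⟩
  apply_zero := by simpa using hw.apply_one
  apply_one := by simpa using hw.apply_zero
  isMaxOn_half x hx := by
    show w (1 - x) ≤ w (1 - 1 / 2)
    rw [show (1:ℝ) - 1 / 2 = 1 / 2 by norm_num]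
    exact hw.le_half ⟨by linarith [hx.2], by linarith [hx.1]⟩

end IsLogisticSolution

/-- Time-map representation of the q-th power of the L^q norm of a positive
    logistic solution. -/
theorem stmt_4 (p γ q : ℝ) (hp : 1 < p) (hγ : 0 < γ) (hq : 0 < q)
    (w : ℝ → ℝ) (hw : ContDiffOn ℝ 2 w (Icc 0 1))
    (heq : ∀ x ∈ Ioo (0:ℝ) 1, -(deriv (deriv w) x) + w x ^ p = γ * w x)
    (hpos : ∀ x ∈ Ioo (0:ℝ) 1, 0 < w x)
    (hb0 : w 0 = 0) (hb1 : w 1 = 0)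
    (k : ℝ) (hk : k = w (1/2)) (hmax : ∀ x ∈ Icc (0:ℝ) 1, w x ≤ k) :
    ∫ x in (0:ℝ)..1, w x ^ q
      = (2 * k ^ q / Real.sqrt γ) *
        ∫ s in (0:ℝ)..1,
          s ^ q / Real.sqrt ((1 - s ^ 2) - (2/(p+1)) * (k ^ (p-1) / γ) * (1 - s ^ (p+1))) := by
  subst hk
  have hsol : IsLogisticSolution p γ w := ⟨hw, heq, hpos, hb0, hb1, hmax⟩
  have hint : ∀ a b : ℝ, 0 ≤ a → a ≤ b → b ≤ 1 →
      IntervalIntegrable (fun x => w x ^ q) volume a b :=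
    fun a b ha hab hb => ((hsol.continuousOn.mono (Icc_subset_Icc ha hb)).rpow_const
      fun _ _ => Or.inr hq.le).intervalIntegrable_of_Icc hab
  have hright : ∫ x in (1 / 2 : ℝ)..1, w x ^ q = ∫ x in (0:ℝ)..1 / 2, w (1 - x) ^ q := by
    rw [intervalIntegral.integral_comp_sub_left (fun x => w x ^ q)]
    norm_num
  have hreflect := hsol.reflect.integral_half hp hγ q
  simp only [show (1:ℝ) - 1 / 2 = 1 / 2 by norm_num] at hreflect
  rw [← intervalIntegral.integral_add_adjacent_intervals (b := 1 / 2)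
      (hint 0 (1 / 2) le_rfl (by norm_num) (by norm_num))
      (hint (1 / 2) 1 (by norm_num) (by norm_num) le_rfl),
    hright, hsol.integral_half hp hγ q, hreflect]
  unfold timeMapRadicand
  ring
end

section
/- Let p > 1 and for k > 0 and γ > 0 with (2/(p+1)) k^{p-1}/γ < (p-1)/(p+1) (so the integrand is well-defined), define T(k, γ) := ∫₀¹ 1/sqrt( (1-s²) - (2/(p+1))(k^{p-1}/γ)(1-s^{p+1}) ) ds. Then for each fixed k > 0, the equation √γ = 2 T(k, γ) (equivalently the time-map condition 1/2 = T(k,γ)/√γ) implies γ → π² as k → 0⁺. That is, if (k_n, γ_n) satisfy √(γ_n) = 2 T(k_n, γ_n), γ_n bounded away from 0, and k_n → 0, then γ_n → π². -/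
open Filter MeasureTheory Real Set Topology

/-!
With `d = k ^ (p - 1) / γ`, Bernoulli's inequality gives
`(1 - d)(1 - s²) ≤ (1 - s²) - (2/(p+1)) d (1 - s^(p+1)) ≤ 1 - s²` on `[0, 1]`, so the time map lies
between `∫₀¹ ds / √(1 - s²) = π/2` and `(1 - d)^(-1/2) π/2`. Since `γₙ ≥ c > 0` and `kₙ → 0`, `dₙ → 0`,
hence `√γₙ = 2 T(kₙ, γₙ) → π`.
-/

lemma hasDerivAt_arcsin_of_mem_Ioo {x : ℝ} (hx : x ∈ Ioo (0:ℝ) 1) :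
    HasDerivAt arcsin (1 / √(1 - x ^ 2)) x :=
  hasDerivAt_arcsin (by linarith [hx.1]) hx.2.ne

lemma intervalIntegrable_one_div_sqrt_one_sub_sq :
    IntervalIntegrable (fun x : ℝ => 1 / √(1 - x ^ 2)) volume 0 1 := by
  refine intervalIntegral.intervalIntegrable_deriv_of_nonneg continuous_arcsin.continuousOn
    (fun x hx => ?_) (fun x _ => by positivity)
  simp only [zero_le_one, min_eq_left, max_eq_right] at hx
  exact hasDerivAt_arcsin_of_mem_Ioo hx

lemma integral_one_div_sqrt_one_sub_sq : ∫ x in (0:ℝ)..1, 1 / √(1 - x ^ 2) = π / 2 := by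
  rw [intervalIntegral.integral_eq_sub_of_hasDerivAt_of_le zero_le_one
    continuous_arcsin.continuousOn (fun x hx => hasDerivAt_arcsin_of_mem_Ioo hx)
    intervalIntegrable_one_div_sqrt_one_sub_sq, arcsin_one, arcsin_zero, sub_zero]

lemma one_sub_rpow_le_mul_one_sub_sq {q s : ℝ} (hq : 2 ≤ q) (hs₀ : 0 ≤ s) :
    1 - s ^ q ≤ q / 2 * (1 - s ^ 2) := by
  have h := one_add_mul_self_le_rpow_one_add (s := s ^ 2 - 1) (by nlinarith) (p := q / 2)
    (by linarith)
  have hpow : (1 + (s ^ 2 - 1)) ^ (q / 2) = s ^ q := by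
    rw [add_sub_cancel, ← rpow_natCast, ← rpow_mul hs₀, Nat.cast_ofNat,
      mul_div_cancel₀ _ two_ne_zero]
  linear_combination h + hpow

lemma one_div_sqrt_le_one_div_sqrt_of_mul_le_of_le {a x y : ℝ} (ha : 0 < a)
    (hxy : a * x ≤ y) (hyx : y ≤ x) :
    1 / √x ≤ 1 / √y ∧ 1 / √y ≤ 1 / √a * (1 / √x) := by
  rcases le_or_gt x 0 with hx | hx
  · have hy : y ≤ 0 := hyx.trans hx
    simp [sqrt_eq_zero'.2 hx, sqrt_eq_zero'.2 hy]
  have hy : 0 < y := (mul_pos ha hx).trans_le hxy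
  refine ⟨one_div_le_one_div_of_le (sqrt_pos.2 hy) (sqrt_le_sqrt hyx), ?_⟩
  rw [one_div_mul_one_div, ← sqrt_mul ha.le]
  exact one_div_le_one_div_of_le (sqrt_pos.2 (mul_pos ha hx)) (sqrt_le_sqrt hxy)

/-- The time map `T(k, γ)` as a function of `d = k ^ (p - 1) / γ`. -/
noncomputable def timeMap (p d : ℝ) : ℝ :=
  ∫ s in (0:ℝ)..1, 1 / √((1 - s ^ 2) - (2 / (p + 1)) * d * (1 - s ^ (p + 1)))

lemma timeMap_integrand_bounds {p d s : ℝ} (hp : 1 ≤ p) (hd : 0 ≤ d) (hs : s ∈ Icc (0:ℝ) 1) :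
    (1 - d) * (1 - s ^ 2) ≤ (1 - s ^ 2) - (2 / (p + 1)) * d * (1 - s ^ (p + 1)) ∧
      (1 - s ^ 2) - (2 / (p + 1)) * d * (1 - s ^ (p + 1)) ≤ 1 - s ^ 2 := by
  have hp₁ : 0 < p + 1 := by linarith
  have hc : 0 ≤ 2 / (p + 1) * d := by positivity
  have hle := one_sub_rpow_le_mul_one_sub_sq (q := p + 1) (by linarith) hs.1
  have hsp : 0 ≤ 1 - s ^ (p + 1) := sub_nonneg.2 (rpow_le_one hs.1 hs.2 hp₁.le)
  constructor
  · have := mul_le_mul_of_nonneg_left hle hc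
    field_simp at this ⊢
    nlinarith
  · nlinarith

lemma timeMap_mem_Icc {p d : ℝ} (hp : 1 ≤ p) (hd₀ : 0 ≤ d) (hd₁ : d < 1) :
    timeMap p d ∈ Icc (π / 2) (1 / √(1 - d) * (π / 2)) := by
  have hbounds : ∀ s ∈ Icc (0:ℝ) 1, _ := fun s hs =>
    have h := timeMap_integrand_bounds hp hd₀ hs
    one_div_sqrt_le_one_div_sqrt_of_mul_le_of_le (sub_pos.2 hd₁) h.1 h.2
  have hdom := intervalIntegrable_one_div_sqrt_one_sub_sq.const_mul (1 / √(1 - d))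
  have hint : IntervalIntegrable
      (fun s : ℝ => 1 / √((1 - s ^ 2) - (2 / (p + 1)) * d * (1 - s ^ (p + 1)))) volume 0 1 := by
    refine hdom.mono_fun (Measurable.aestronglyMeasurable (by fun_prop)) ?_
    filter_upwards [ae_restrict_mem measurableSet_uIoc] with s hs
    rw [uIoc_of_le zero_le_one] at hs
    rw [norm_of_nonneg (by positivity), norm_of_nonneg (by positivity)]
    exact (hbounds s (Ioc_subset_Icc_self hs)).2
  constructor
  · rw [← integral_one_div_sqrt_one_sub_sq]
    exact intervalIntegral.integral_mono_on zero_le_one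
      intervalIntegrable_one_div_sqrt_one_sub_sq hint fun s hs => (hbounds s hs).1
  · rw [← integral_one_div_sqrt_one_sub_sq, ← intervalIntegral.integral_const_mul]
    exact intervalIntegral.integral_mono_on zero_le_one hint hdom fun s hs => (hbounds s hs).2

lemma tendsto_timeMap {p : ℝ} (hp : 1 ≤ p) : Tendsto (timeMap p) (𝓝[≥] 0) (𝓝 (π / 2)) := by
  have hupper : Tendsto (fun d : ℝ => 1 / √(1 - d) * (π / 2)) (𝓝[≥] 0) (𝓝 (π / 2)) := by
    have : ContinuousAt (fun d : ℝ => 1 / √(1 - d) * (π / 2)) 0 := by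
      fun_prop (disch := norm_num)
    simpa using this.tendsto.mono_left nhdsWithin_le_nhds
  have hlt : ∀ᶠ d in 𝓝[≥] (0:ℝ), d ∈ Ico 0 1 := Ico_mem_nhdsGE zero_lt_one
  refine tendsto_of_tendsto_of_tendsto_of_le_of_le' tendsto_const_nhds hupper ?_ ?_ <;>
    filter_upwards [hlt] with d hd
  exacts [(timeMap_mem_Icc hp hd.1 hd.2).1, (timeMap_mem_Icc hp hd.1 hd.2).2]

/-- If (kₙ, γₙ) satisfy the time-map relation √γₙ = 2T(kₙ,γₙ), γₙ is bounded away
    from 0, and kₙ → 0, then γₙ → π². -/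
theorem stmt_10 (p : ℝ) (hp : 1 < p)
    (T : ℝ → ℝ → ℝ)
    (hT : ∀ k γ : ℝ, 0 < k → 0 < γ →
      (2/(p+1)) * k ^ (p-1) / γ < (p-1)/(p+1) →
      T k γ = ∫ s in (0:ℝ)..1,
        1 / Real.sqrt ((1 - s ^ 2) - (2/(p+1)) * (k ^ (p-1) / γ) * (1 - s ^ (p+1))))
    (k γ : ℕ → ℝ) (c : ℝ) (hc : 0 < c)
    (hkpos : ∀ n, 0 < k n) (hγc : ∀ n, c ≤ γ n)
    (hwd : ∀ n, (2/(p+1)) * (k n) ^ (p-1) / γ n < (p-1)/(p+1))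
    (hrel : ∀ n, Real.sqrt (γ n) = 2 * T (k n) (γ n))
    (hk0 : Tendsto k atTop (nhds 0)) :
    Tendsto γ atTop (nhds (Real.pi ^ 2)) := by
  have hγpos : ∀ n, 0 < γ n := fun n => hc.trans_le (hγc n)
  have hkp : Tendsto (fun n => k n ^ (p - 1) / c) atTop (𝓝 0) := by
    simpa [zero_rpow (sub_ne_zero.2 hp.ne')] using
      ((continuousAt_rpow_const 0 (p - 1) (Or.inr (by linarith))).tendsto.comp hk0).div_const c
  have hd : Tendsto (fun n => k n ^ (p - 1) / γ n) atTop (𝓝[≥] 0) := by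
    refine tendsto_nhdsWithin_of_tendsto_nhds_of_eventually_within _
      (squeeze_zero (fun n => ?_) (fun n => ?_) hkp) (.of_forall fun n => ?_) <;>
    have := rpow_pos_of_pos (hkpos n) (p - 1)
    · exact (div_pos this (hγpos n)).le
    · exact div_le_div_of_nonneg_left this.le hc (hγc n)
    · exact (div_pos this (hγpos n)).le
  have hsqrt : Tendsto (fun n => √(γ n)) atTop (𝓝 π) := by
    have hTn : ∀ n, √(γ n) = 2 * timeMap p (k n ^ (p - 1) / γ n) := fun n => by
      rw [hrel, hT _ _ (hkpos n) (hγpos n) (hwd n), timeMap]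
    simpa [hTn, mul_div_cancel₀ π two_ne_zero] using ((tendsto_timeMap hp.le).comp hd).const_mul 2
  simpa [sq_sqrt (hγpos _).le] using hsqrt.pow 2
end

section
/- Let p > 1 and define A₃ := (2/((p+1)π²)) (√2)^{p-1} ∫₀¹ (1-s^{p+1})/(1-s²)^{3/2} ds. Suppose for each small d > 0 the pair (k, γ) = (k(d), γ(d)) satisfies the time-map identity 1/2 = (1/√γ)∫₀¹ ds/sqrt((1-s²) - (2/(p+1))(k^{p-1}/γ)(1-s^{p+1})), with k(d) = √2 d (1 + o(1)) and γ(d) → π² as d → 0. Then √(γ(d)) = π + A₃ d^{p-1} + o(d^{p-1}) and γ(d) = π² + 2π A₃ d^{p-1} + o(d^{p-1}) as d → 0. -/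
open Filter Set Asymptotics

namespace Stmt11Aux
open MeasureTheory

variable {p : ℝ}

lemma int_om : IntegrableOn (fun s : ℝ => (1 - s) ^ (-(1/2) : ℝ)) (Ioo (0:ℝ) 1) volume := by
  have h : IntervalIntegrable (fun x : ℝ => x ^ (-(1/2) : ℝ)) volume 0 1 :=
    intervalIntegral.intervalIntegrable_rpow' (by norm_num)
  have h2 := (h.comp_sub_left 1).symm
  simp only [sub_zero, sub_self] at h2
  have h3 : IntegrableOn (fun s : ℝ => (1 - s) ^ (-(1/2) : ℝ)) (Ioc (0:ℝ) 1) volume :=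
    (intervalIntegrable_iff_integrableOn_Ioc_of_le (by norm_num)).1 h2
  exact h3.mono_set Ioo_subset_Ioc_self

lemma bern {p : ℝ} (hp : 1 < p) {s : ℝ} (hs0 : 0 ≤ s) :
    1 - s ^ (p+1) ≤ (p+1) * (1 - s) := by
  have h := one_add_mul_self_le_rpow_one_add (s := s - 1) (by linarith) (p := p + 1) (by linarith)
  have h1 : (1 : ℝ) + (s - 1) = s := by ring
  rw [h1] at h
  nlinarith [h]

lemma y_nonneg {p : ℝ} (hp : 1 < p) {s : ℝ} (hs : s ∈ Ioo (0:ℝ) 1) :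
    0 ≤ 1 - s ^ (p+1) := by
  have : s ^ (p+1) ≤ 1 := Real.rpow_le_one hs.1.le hs.2.le (by linarith)
  linarith

lemma x_pos {s : ℝ} (hs : s ∈ Ioo (0:ℝ) 1) : 0 < 1 - s ^ 2 := by
  nlinarith [hs.1, hs.2]

lemma y_le_x {p : ℝ} (hp : 1 < p) {s : ℝ} (hs : s ∈ Ioo (0:ℝ) 1) :
    1 - s ^ (p+1) ≤ (p+1) * (1 - s ^ 2) := by
  have h1 := bern hp hs.1.le
  have h2 : (1:ℝ) - s ≤ 1 - s ^ 2 := by nlinarith [hs.1, hs.2]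
  nlinarith

/-- lower bound for the shifted quantity -/
lemma a_lb {p : ℝ} (hp : 1 < p) {δ s : ℝ} (hδ : 0 < δ) (hδ' : δ ≤ 1/(2*(p+1)))
    (hs : s ∈ Ioo (0:ℝ) 1) :
    (1 - s ^ 2) / 2 ≤ (1 - s ^ 2) - δ * (1 - s ^ (p+1)) := by
  have h1 := y_le_x hp hs
  have h2 := y_nonneg hp hs
  have h3 := x_pos hs
  have h4 : δ * (1 - s ^ (p+1)) ≤ (1/(2*(p+1))) * ((p+1) * (1 - s ^ 2)) := by
    apply mul_le_mul hδ' h1 h2 (by positivity)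
  have h5 : (1/(2*(p+1))) * ((p+1) * (1 - s ^ 2)) = (1 - s ^ 2)/2 := by
    field_simp
  nlinarith


lemma rpow32 {x : ℝ} (hx : 0 < x) : x ^ ((3:ℝ)/2) = x * Real.sqrt x := by
  rw [show (3:ℝ)/2 = 1 + 1/2 by norm_num, Real.rpow_add hx, Real.rpow_one,
    ← Real.sqrt_eq_rpow]

-- g ≤ (p+1) * (1-s)^(-1/2)
lemma g_le {p : ℝ} (hp : 1 < p) {s : ℝ} (hs : s ∈ Ioo (0:ℝ) 1) :
    (1 - s ^ (p+1)) / (1 - s ^ 2) ^ ((3:ℝ)/2) ≤ (p+1) * (1 - s) ^ (-(1/2) : ℝ) := by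
  have hs1 : (0:ℝ) < 1 - s := by nlinarith [hs.2]
  have hx : (0:ℝ) < 1 - s ^ 2 := by nlinarith [hs.1, hs.2]
  have hle : (1:ℝ) - s ≤ 1 - s ^ 2 := by nlinarith [hs.1, hs.2]
  have hb : (1 - s) ^ ((3:ℝ)/2) ≤ (1 - s ^ 2) ^ ((3:ℝ)/2) :=
    Real.rpow_le_rpow hs1.le hle (by norm_num)
  have hnum : 1 - s ^ (p+1) ≤ (p+1) * (1 - s) := by
    have h := one_add_mul_self_le_rpow_one_add (s := s - 1) (by nlinarith [hs.1]) (p := p + 1) (by linarith)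
    have h1 : (1 : ℝ) + (s - 1) = s := by ring
    rw [h1] at h; nlinarith [h]
  have hynn : 0 ≤ 1 - s ^ (p+1) := by
    have : s ^ (p+1) ≤ 1 := Real.rpow_le_one hs.1.le hs.2.le (by linarith)
    linarith
  calc (1 - s ^ (p+1)) / (1 - s ^ 2) ^ ((3:ℝ)/2)
      ≤ ((p+1) * (1 - s)) / (1 - s) ^ ((3:ℝ)/2) := by
        apply div_le_div₀ (by positivity) hnum (by positivity) hb
    _ = (p+1) * (1 - s) ^ (-(1/2) : ℝ) := by
        rw [show (-(1/2) : ℝ) = 1 - (3:ℝ)/2 by norm_num, Real.rpow_sub hs1, Real.rpow_one]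
        ring


lemma int_g {p : ℝ} (hp : 1 < p) :
    IntegrableOn (fun s : ℝ => (1 - s ^ (p+1)) / (1 - s ^ 2) ^ ((3:ℝ)/2)) (Ioo (0:ℝ) 1) volume := by
  apply Integrable.mono (int_om.const_mul (p+1)) (Measurable.aestronglyMeasurable (by fun_prop))
  filter_upwards [ae_restrict_mem measurableSet_Ioo] with s hs
  have hynn : 0 ≤ 1 - s ^ (p+1) := by
    have : s ^ (p+1) ≤ 1 := Real.rpow_le_one hs.1.le hs.2.le (by linarith)
    linarith
  have hx : (0:ℝ) < 1 - s ^ 2 := by nlinarith [hs.1, hs.2]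
  have hs1 : (0:ℝ) < 1 - s := by nlinarith [hs.2]
  rw [Real.norm_eq_abs, Real.norm_eq_abs, abs_of_nonneg (by positivity),
    abs_of_nonneg (by positivity)]
  exact g_le hp hs


lemma inv_sqrt_eq {x : ℝ} (hx : 0 ≤ x) : 1 / Real.sqrt x = x ^ (-(1/2) : ℝ) := by
  rw [Real.rpow_neg hx, Real.sqrt_eq_rpow, one_div]

lemma f2_le {s : ℝ} (hs : s ∈ Ioo (0:ℝ) 1) :
    1 / Real.sqrt (1 - s ^ 2) ≤ (1 - s) ^ (-(1/2) : ℝ) := by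
  have hs1 : (0:ℝ) < 1 - s := by nlinarith [hs.2]
  have hx : (0:ℝ) < 1 - s ^ 2 := by nlinarith [hs.1, hs.2]
  have hle : (1:ℝ) - s ≤ 1 - s ^ 2 := by nlinarith [hs.1, hs.2]
  rw [← inv_sqrt_eq hs1.le]
  apply one_div_le_one_div_of_le (Real.sqrt_pos.2 hs1)
  exact Real.sqrt_le_sqrt hle

lemma int_f2 : IntegrableOn (fun s : ℝ => 1 / Real.sqrt (1 - s ^ 2)) (Ioo (0:ℝ) 1) volume := by
  apply Integrable.mono int_om (Measurable.aestronglyMeasurable (by fun_prop))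
  filter_upwards [ae_restrict_mem measurableSet_Ioo] with s hs
  have hs1 : (0:ℝ) < 1 - s := by nlinarith [hs.2]
  rw [Real.norm_eq_abs, Real.norm_eq_abs, abs_of_nonneg (by positivity),
    abs_of_nonneg (by positivity)]
  exact f2_le hs

lemma Ival : ∫ s in Ioo (0:ℝ) 1, 1 / Real.sqrt (1 - s ^ 2) = Real.pi / 2 := by
  have hint : IntervalIntegrable (fun s : ℝ => 1 / Real.sqrt (1 - s ^ 2)) volume 0 1 := by
    rw [intervalIntegrable_iff_integrableOn_Ioc_of_le (by norm_num),
      integrableOn_Ioc_iff_integrableOn_Ioo]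
    exact int_f2
  have h := intervalIntegral.integral_eq_sub_of_hasDerivAt_of_le (f := Real.arcsin)
    (f' := fun s : ℝ => 1 / Real.sqrt (1 - s ^ 2)) (by norm_num)
    (Real.continuous_arcsin.continuousOn)
    (fun x hx => Real.hasDerivAt_arcsin (by nlinarith [hx.1]) (ne_of_lt hx.2)) hint
  rw [Real.arcsin_one, Real.arcsin_zero, sub_zero] at h
  rw [← integral_Ioc_eq_integral_Ioo, ← intervalIntegral.integral_of_le (by norm_num : (0:ℝ) ≤ 1)]
  exact h

lemma alg {x y δ : ℝ} (hx : 0 < x) (ha : 0 < x - δ * y) (hδ : 0 < δ) :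
    (1 / Real.sqrt (x - δ * y) - 1 / Real.sqrt x) / δ
      = y / (Real.sqrt (x - δ * y) * Real.sqrt x * (Real.sqrt (x - δ * y) + Real.sqrt x)) := by
  have h1 : Real.sqrt (x - δ * y) ^ 2 = x - δ * y := Real.sq_sqrt ha.le
  have h2 : Real.sqrt x ^ 2 = x := Real.sq_sqrt hx.le
  have p1 : 0 < Real.sqrt (x - δ * y) := Real.sqrt_pos.2 ha
  have p2 : 0 < Real.sqrt x := Real.sqrt_pos.2 hx
  field_simp
  nlinarith [h1, h2, p1, p2, mul_pos p1 p2]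


lemma key (hp : 1 < p) :
    Tendsto (fun δ => ∫ s in Ioo (0:ℝ) 1,
        (1 / Real.sqrt ((1 - s ^ 2) - δ * (1 - s ^ (p+1))) - 1 / Real.sqrt (1 - s ^ 2)) / δ)
      (nhdsWithin 0 (Ioi 0))
      (nhds (∫ s in Ioo (0:ℝ) 1, (1 - s ^ (p+1)) / (1 - s ^ 2) ^ ((3:ℝ)/2) / 2)) := by
  have hδ₀ : (0:ℝ) < 1/(2*(p+1)) := by positivity
  have hmem : Ioc (0:ℝ) (1/(2*(p+1))) ∈ nhdsWithin (0:ℝ) (Ioi 0) :=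
    Ioc_mem_nhdsGT_of_mem ⟨le_refl 0, hδ₀⟩
  apply tendsto_integral_filter_of_dominated_convergence
      (bound := fun s : ℝ => Real.sqrt 2 * ((p+1) * (1 - s) ^ (-(1/2) : ℝ)))
  · filter_upwards [hmem] with δ hδ
    exact Measurable.aestronglyMeasurable (by fun_prop)
  · filter_upwards [hmem] with δ hδ
    filter_upwards [ae_restrict_mem measurableSet_Ioo] with s hs
    have hx := x_pos hs
    have hy := y_nonneg hp hs
    have ha : 0 < (1 - s ^ 2) - δ * (1 - s ^ (p+1)) :=
      lt_of_lt_of_le (by linarith) (a_lb hp hδ.1 hδ.2 hs)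
    have halb := a_lb hp hδ.1 hδ.2 hs
    set x := 1 - s ^ 2 with hxdef
    set y := 1 - s ^ (p+1) with hydef
    clear_value x y
    rw [alg hx ha hδ.1]
    have pA : 0 < Real.sqrt (x - δ * y) := Real.sqrt_pos.2 ha
    have pX : 0 < Real.sqrt x := Real.sqrt_pos.2 hx
    rw [Real.norm_eq_abs, abs_of_nonneg (by positivity)]
    -- √x ≤ √2 * √(x - δ*y)
    have h2a : Real.sqrt x ≤ Real.sqrt 2 * Real.sqrt (x - δ * y) := by
      rw [← Real.sqrt_mul (by norm_num)]
      apply Real.sqrt_le_sqrt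
      nlinarith [halb]
    have hX3 : Real.sqrt x ^ 3 = x ^ ((3:ℝ)/2) := by
      rw [rpow32 hx]
      rw [show Real.sqrt x ^ 3 = Real.sqrt x ^ 2 * Real.sqrt x by ring, Real.sq_sqrt hx.le]
    have step1 : y / (Real.sqrt (x - δ * y) * Real.sqrt x * (Real.sqrt (x - δ * y) + Real.sqrt x))
        ≤ y / (Real.sqrt x ^ 3 / Real.sqrt 2) := by
      apply div_le_div_of_nonneg_left hy (by positivity)
      have s2 : (1:ℝ) ≤ Real.sqrt 2 := by
        rw [show (1:ℝ) = Real.sqrt 1 by simp]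
        exact Real.sqrt_le_sqrt (by norm_num)
      rw [div_le_iff₀ (by positivity)]
      calc Real.sqrt x ^ 3 = Real.sqrt x * Real.sqrt x * Real.sqrt x := by ring
        _ ≤ (Real.sqrt 2 * Real.sqrt (x - δ * y)) * Real.sqrt x * (Real.sqrt (x - δ * y) + Real.sqrt x) := by
            apply mul_le_mul
            · exact mul_le_mul_of_nonneg_right h2a pX.le
            · linarith
            · exact pX.le
            · positivity
        _ = Real.sqrt (x - δ * y) * Real.sqrt x * (Real.sqrt (x - δ * y) + Real.sqrt x) * Real.sqrt 2 := by ring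
    have step2 : y / (Real.sqrt x ^ 3 / Real.sqrt 2) = Real.sqrt 2 * (y / x ^ ((3:ℝ)/2)) := by
      rw [hX3]; field_simp
    calc y / (Real.sqrt (x - δ * y) * Real.sqrt x * (Real.sqrt (x - δ * y) + Real.sqrt x))
        ≤ Real.sqrt 2 * (y / x ^ ((3:ℝ)/2)) := by rw [← step2]; exact step1
      _ ≤ Real.sqrt 2 * ((p+1) * (1 - s) ^ (-(1/2) : ℝ)) := by
          have hgle : y / x ^ ((3:ℝ)/2) ≤ (p+1) * (1 - s) ^ (-(1/2) : ℝ) := by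
            rw [hxdef, hydef]; exact g_le hp hs
          exact mul_le_mul_of_nonneg_left hgle (Real.sqrt_nonneg 2)
  · exact ((int_om.const_mul (p+1)).const_mul (Real.sqrt 2))
  · filter_upwards [ae_restrict_mem measurableSet_Ioo] with s hs
    have hx := x_pos hs
    have hy := y_nonneg hp hs
    have halb : ∀ δ : ℝ, 0 < δ → δ ≤ 1/(2*(p+1)) → (1 - s ^ 2)/2 ≤ (1 - s ^ 2) - δ * (1 - s ^ (p+1)) :=
      fun δ h1 h2 => a_lb hp h1 h2 hs
    set x := 1 - s ^ 2 with hxdef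
    set y := 1 - s ^ (p+1) with hydef
    clear_value x y
    have pX : 0 < Real.sqrt x := Real.sqrt_pos.2 hx
    have hG : Tendsto (fun δ : ℝ => y / (Real.sqrt (x - δ * y) * Real.sqrt x *
        (Real.sqrt (x - δ * y) + Real.sqrt x))) (nhdsWithin 0 (Ioi 0))
        (nhds (y / (Real.sqrt x * Real.sqrt x * (Real.sqrt x + Real.sqrt x)))) := by
      have hden : Real.sqrt x * Real.sqrt x * (Real.sqrt x + Real.sqrt x) ≠ 0 :=
        ne_of_gt (mul_pos (mul_pos pX pX) (by linarith))
      apply Tendsto.mono_left _ nhdsWithin_le_nhds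
      have hsq : Tendsto (fun δ : ℝ => Real.sqrt (x - δ * y)) (nhds 0) (nhds (Real.sqrt x)) := by
        have h0 : Tendsto (fun δ : ℝ => x - δ * y) (nhds 0) (nhds (x - 0 * y)) :=
          tendsto_const_nhds.sub (tendsto_id.mul tendsto_const_nhds)
        rw [zero_mul, sub_zero] at h0
        have : Tendsto (fun δ : ℝ => x - δ * y) (nhds 0) (nhds x) := h0
        exact (Real.continuous_sqrt.tendsto _).comp this
      apply Tendsto.div tendsto_const_nhds
      · exact ((hsq.mul tendsto_const_nhds).mul (hsq.add tendsto_const_nhds))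
      · exact hden
    have hval : y / (Real.sqrt x * Real.sqrt x * (Real.sqrt x + Real.sqrt x)) = y / x ^ ((3:ℝ)/2) / 2 := by
      rw [rpow32 hx, Real.mul_self_sqrt hx.le, div_div]
      congr 1
      ring
    rw [hval] at hG
    apply hG.congr'
    filter_upwards [Ioc_mem_nhdsGT_of_mem ⟨le_refl (0:ℝ), hδ₀⟩] with δ hδ
    have ha : 0 < x - δ * y := lt_of_lt_of_le (by linarith) (halb δ hδ.1 hδ.2)
    exact (alg hx ha hδ.1).symm


lemma int_f1 (hp : 1 < p) {δ : ℝ} (hδ : δ ∈ Ioc (0:ℝ) (1/(2*(p+1)))) :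
    IntegrableOn (fun s : ℝ => 1 / Real.sqrt ((1 - s ^ 2) - δ * (1 - s ^ (p+1))))
      (Ioo (0:ℝ) 1) volume := by
  apply Integrable.mono (int_om.const_mul (Real.sqrt 2))
    (Measurable.aestronglyMeasurable (by fun_prop))
  filter_upwards [ae_restrict_mem measurableSet_Ioo] with s hs
  have hx := x_pos hs
  have hy := y_nonneg hp hs
  have hs1 : (0:ℝ) < 1 - s := by nlinarith [hs.2]
  have hle : (1:ℝ) - s ≤ 1 - s ^ 2 := by nlinarith [hs.1, hs.2]
  have halb := a_lb hp hδ.1 hδ.2 hs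
  have ha : 0 < (1 - s ^ 2) - δ * (1 - s ^ (p+1)) := by linarith
  have pA : 0 < Real.sqrt ((1 - s ^ 2) - δ * (1 - s ^ (p+1))) := Real.sqrt_pos.2 ha
  have pS : 0 < Real.sqrt (1 - s) := Real.sqrt_pos.2 hs1
  rw [Real.norm_eq_abs, Real.norm_eq_abs, abs_of_nonneg (by positivity),
    abs_of_nonneg (by positivity)]
  have h2a : Real.sqrt (1 - s) ≤ Real.sqrt 2 *
      Real.sqrt ((1 - s ^ 2) - δ * (1 - s ^ (p+1))) := by
    rw [← Real.sqrt_mul (by norm_num)]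
    apply Real.sqrt_le_sqrt
    linarith
  rw [← inv_sqrt_eq hs1.le, mul_one_div]
  rw [div_le_div_iff₀ pA pS]
  nlinarith [h2a, pA, pS]

lemma key2 (hp : 1 < p) :
    Tendsto (fun δ => ((∫ s in (0:ℝ)..1,
        1 / Real.sqrt ((1 - s ^ 2) - δ * (1 - s ^ (p+1)))) - Real.pi/2) / δ)
      (nhdsWithin 0 (Ioi 0))
      (nhds ((∫ s in (0:ℝ)..1, (1 - s ^ (p+1)) / (1 - s ^ 2) ^ ((3:ℝ)/2)) / 2)) := by
  have hδ₀ : (0:ℝ) < 1/(2*(p+1)) := by positivity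
  have hJ : (∫ s in (0:ℝ)..1, (1 - s ^ (p+1)) / (1 - s ^ 2) ^ ((3:ℝ)/2)) / 2
      = ∫ s in Ioo (0:ℝ) 1, (1 - s ^ (p+1)) / (1 - s ^ 2) ^ ((3:ℝ)/2) / 2 := by
    rw [intervalIntegral.integral_of_le (by norm_num : (0:ℝ) ≤ 1),
      integral_Ioc_eq_integral_Ioo, integral_div]
  rw [hJ]
  apply (key hp).congr'
  filter_upwards [Ioc_mem_nhdsGT_of_mem ⟨le_refl (0:ℝ), hδ₀⟩] with δ hδ
  have h1 := int_f1 hp hδ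
  have heq : ∫ s in Ioo (0:ℝ) 1,
      (1 / Real.sqrt ((1 - s ^ 2) - δ * (1 - s ^ (p+1))) - 1 / Real.sqrt (1 - s ^ 2)) / δ
      = ((∫ s in Ioo (0:ℝ) 1, 1 / Real.sqrt ((1 - s ^ 2) - δ * (1 - s ^ (p+1))))
        - ∫ s in Ioo (0:ℝ) 1, 1 / Real.sqrt (1 - s ^ 2)) / δ := by
    rw [← integral_sub h1 int_f2, ← integral_div]
  rw [heq, Ival, intervalIntegral.integral_of_le (by norm_num : (0:ℝ) ≤ 1),
    integral_Ioc_eq_integral_Ioo]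


lemma littleO_of_tendsto {p : ℝ} (hp : 1 < p) {f : ℝ → ℝ} {c : ℝ}
    (hT : Tendsto (fun d => f d / d ^ (p-1)) (nhdsWithin 0 (Ioi 0)) (nhds c)) :
    (fun d => f d - c * d ^ (p-1)) =o[nhdsWithin 0 (Ioi 0)] (fun d => d ^ (p-1)) := by
  have hd_pos : ∀ᶠ d in nhdsWithin (0:ℝ) (Ioi 0), (0:ℝ) < d := eventually_mem_nhdsWithin
  have hDne : ∀ᶠ d in nhdsWithin (0:ℝ) (Ioi 0), d ^ (p-1) ≠ 0 := by
    filter_upwards [hd_pos] with d hd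
    exact (Real.rpow_pos_of_pos hd _).ne'
  rw [isLittleO_iff_tendsto']
  · have h := hT.sub (tendsto_const_nhds (x := c))
    rw [sub_self] at h
    apply h.congr'
    filter_upwards [hDne] with d hD
    field_simp
  · filter_upwards [hDne] with d hD h0
    exact absurd h0 hD


end Stmt11Aux

/-- Expansion of the eigenvalue: √γ(d) = π + A₃ d^{p-1} + o(d^{p-1}) and
    γ(d) = π² + 2πA₃ d^{p-1} + o(d^{p-1}) as d → 0⁺. -/
theorem stmt_11 (p : ℝ) (hp : 1 < p)
    (A₃ : ℝ)
    (hA₃ : A₃ = (2/((p+1) * Real.pi ^ 2)) * (Real.sqrt 2) ^ (p-1)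
        * ∫ s in (0:ℝ)..1, (1 - s ^ (p+1)) / (1 - s ^ 2) ^ ((3:ℝ)/2))
    (k γ : ℝ → ℝ)
    (hγpos : ∀ᶠ d in nhdsWithin 0 (Ioi 0), 0 < γ d)
    (htm : ∀ᶠ d in nhdsWithin 0 (Ioi 0),
      (1:ℝ)/2 = (1 / Real.sqrt (γ d)) *
        ∫ s in (0:ℝ)..1,
          1 / Real.sqrt ((1 - s ^ 2) - (2/(p+1)) * ((k d) ^ (p-1) / γ d) * (1 - s ^ (p+1))))
    (ε : ℝ → ℝ) (hε : Tendsto ε (nhdsWithin 0 (Ioi 0)) (nhds 0))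
    (hk : ∀ᶠ d in nhdsWithin 0 (Ioi 0), k d = Real.sqrt 2 * d * (1 + ε d))
    (hγlim : Tendsto γ (nhdsWithin 0 (Ioi 0)) (nhds (Real.pi ^ 2))) :
    (fun d => Real.sqrt (γ d) - Real.pi - A₃ * d ^ (p-1))
        =o[nhdsWithin 0 (Ioi 0)] (fun d => d ^ (p-1)) ∧
    (fun d => γ d - Real.pi ^ 2 - 2 * Real.pi * A₃ * d ^ (p-1))
        =o[nhdsWithin 0 (Ioi 0)] (fun d => d ^ (p-1)) := by
  set L := nhdsWithin (0:ℝ) (Ioi 0) with hL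
  set J := ∫ s in (0:ℝ)..1, (1 - s ^ (p+1)) / (1 - s ^ 2) ^ ((3:ℝ)/2) with hJdef
  set δf : ℝ → ℝ := fun d => (2/(p+1)) * ((k d) ^ (p-1) / γ d) with hδf
  have hπ : (0:ℝ) < Real.pi := Real.pi_pos
  have hπ2 : (0:ℝ) < Real.pi ^ 2 := by positivity
  have hd_pos : ∀ᶠ d in L, (0:ℝ) < d := eventually_mem_nhdsWithin
  have hd0 : Tendsto (fun d : ℝ => d) L (nhds 0) := tendsto_id.mono_right nhdsWithin_le_nhds
  have hε1 : ∀ᶠ d in L, -(1:ℝ)/2 < ε d := hε.eventually (eventually_gt_nhds (by norm_num))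
  -- k tends to 0
  have hk0 : Tendsto k L (nhds 0) := by
    have h : Tendsto (fun d => Real.sqrt 2 * d * (1 + ε d)) L
        (nhds (Real.sqrt 2 * 0 * (1 + 0))) :=
      (tendsto_const_nhds.mul hd0).mul (tendsto_const_nhds.add hε)
    rw [show Real.sqrt 2 * 0 * (1 + 0) = (0:ℝ) by ring] at h
    exact h.congr' (hk.mono fun d hd => hd.symm)
  -- k^(p-1) tends to 0
  have hkr : Tendsto (fun d => (k d) ^ (p-1)) L (nhds 0) := by
    have hc : ContinuousAt (fun x : ℝ => x ^ (p-1)) 0 :=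
      Real.continuousAt_rpow_const 0 (p-1) (Or.inr (by linarith))
    have h := hc.tendsto.comp hk0
    rw [Real.zero_rpow (show p - 1 ≠ 0 from (by linarith : (0:ℝ) < p - 1).ne')] at h
    exact h
  -- δf tends to 0 within Ioi 0
  have hδlim : Tendsto δf L (nhds 0) := by
    have h : Tendsto δf L (nhds ((2/(p+1)) * (0 / Real.pi ^ 2))) :=
      tendsto_const_nhds.mul (hkr.div hγlim hπ2.ne')
    rw [show (2/(p+1)) * ((0:ℝ) / Real.pi ^ 2) = 0 by ring] at h
    exact h
  have hkpos : ∀ᶠ d in L, 0 < k d := by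
    filter_upwards [hk, hd_pos, hε1] with d h1 h2 h3
    rw [h1]
    have h5 : (0:ℝ) < Real.sqrt 2 := by positivity
    exact mul_pos (mul_pos h5 h2) (by linarith)
  have hδpos : ∀ᶠ d in L, 0 < δf d := by
    filter_upwards [hkpos, hγpos] with d h1 h2
    have : 0 < (k d) ^ (p-1) := Real.rpow_pos_of_pos h1 _
    have hp1 : (0:ℝ) < p + 1 := by linarith
    positivity
  have hδ : Tendsto δf L (nhdsWithin 0 (Ioi 0)) :=
    tendsto_nhdsWithin_iff.2 ⟨hδlim, hδpos⟩
  -- composed limit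
  have hI : Tendsto (fun d => ((∫ s in (0:ℝ)..1,
      1 / Real.sqrt ((1 - s ^ 2) - δf d * (1 - s ^ (p+1)))) - Real.pi/2) / δf d)
      L (nhds (J / 2)) := (Stmt11Aux.key2 hp).comp hδ
  -- ratio limit
  have hone : Tendsto (fun d => (1 + ε d) ^ (p-1)) L (nhds 1) := by
    have hc : ContinuousAt (fun x : ℝ => x ^ (p-1)) 1 :=
      Real.continuousAt_rpow_const 1 (p-1) (Or.inl one_ne_zero)
    have h1 : Tendsto (fun d => 1 + ε d) L (nhds (1 + 0)) := tendsto_const_nhds.add hε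
    rw [add_zero] at h1
    have h := hc.tendsto.comp h1
    rw [Real.one_rpow] at h
    exact h
  have hR : Tendsto (fun d => δf d / d ^ (p-1)) L
      (nhds ((2/(p+1)) * ((Real.sqrt 2) ^ (p-1) * 1 / Real.pi ^ 2))) := by
    have h : Tendsto (fun d => (2/(p+1)) * ((Real.sqrt 2) ^ (p-1) * (1 + ε d) ^ (p-1) / γ d)) L
        (nhds ((2/(p+1)) * ((Real.sqrt 2) ^ (p-1) * 1 / Real.pi ^ 2))) :=
      tendsto_const_nhds.mul ((tendsto_const_nhds.mul hone).div hγlim hπ2.ne')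
    apply h.congr'
    filter_upwards [hk, hd_pos, hε1, hγpos] with d h1 h2 h3 h4
    have hDne : d ^ (p-1) ≠ 0 := (Real.rpow_pos_of_pos h2 _).ne'
    have he : (0:ℝ) ≤ 1 + ε d := by linarith
    have hkr2 : (k d) ^ (p-1) = (Real.sqrt 2) ^ (p-1) * d ^ (p-1) * (1 + ε d) ^ (p-1) := by
      rw [h1, Real.mul_rpow (by positivity) he, Real.mul_rpow (Real.sqrt_nonneg 2) h2.le]
    rw [hδf]
    simp only
    rw [hkr2]
    field_simp
  -- sqrt γ = 2 I
  have hsg : ∀ᶠ d in L, Real.sqrt (γ d) = 2 * ∫ s in (0:ℝ)..1,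
      1 / Real.sqrt ((1 - s ^ 2) - δf d * (1 - s ^ (p+1))) := by
    filter_upwards [htm, hγpos] with d h1 h2
    have hsp : 0 < Real.sqrt (γ d) := Real.sqrt_pos.2 h2
    have h1' : (1:ℝ)/2 = (1 / Real.sqrt (γ d)) * ∫ s in (0:ℝ)..1,
        1 / Real.sqrt ((1 - s ^ 2) - δf d * (1 - s ^ (p+1))) := h1
    field_simp at h1'
    linarith
  -- main tendsto for sqrt
  have hT1 : Tendsto (fun d => (Real.sqrt (γ d) - Real.pi) / d ^ (p-1)) L (nhds A₃) := by
    have h := (tendsto_const_nhds (x := (2:ℝ)).mul hI).mul hR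
    have hval : (2:ℝ) * (J/2) * ((2/(p+1)) * ((Real.sqrt 2) ^ (p-1) * 1 / Real.pi ^ 2)) = A₃ := by
      rw [hA₃, hJdef]
      field_simp
    rw [hval] at h
    apply h.congr'
    filter_upwards [hsg, hδpos, hd_pos] with d h1 h2 h3
    have hDne : d ^ (p-1) ≠ 0 := (Real.rpow_pos_of_pos h3 _).ne'
    rw [h1]
    field_simp
  have hsqlim : Tendsto (fun d => Real.sqrt (γ d)) L (nhds Real.pi) := by
    have h := (Real.continuous_sqrt.tendsto _).comp hγlim
    rwa [show Real.sqrt (Real.pi ^ 2) = Real.pi from Real.sqrt_sq hπ.le] at h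
  have hT2 : Tendsto (fun d => (γ d - Real.pi ^ 2) / d ^ (p-1)) L (nhds (2 * Real.pi * A₃)) := by
    have h := hT1.mul (hsqlim.add (tendsto_const_nhds (x := Real.pi)))
    rw [show A₃ * (Real.pi + Real.pi) = 2 * Real.pi * A₃ by ring] at h
    apply h.congr'
    filter_upwards [hγpos] with d h1
    have hsq : Real.sqrt (γ d) ^ 2 = γ d := Real.sq_sqrt h1.le
    have : (Real.sqrt (γ d) - Real.pi) * (Real.sqrt (γ d) + Real.pi) = γ d - Real.pi ^ 2 := by
      nlinarith [hsq]
    rw [div_mul_eq_mul_div, this]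
  exact ⟨Stmt11Aux.littleO_of_tendsto hp hT1, Stmt11Aux.littleO_of_tendsto hp hT2⟩
end

section
/- Let p > 3, q > 1, a₁, a₂ ≥ 0 with a₁ + a₂ > 0, and C₁ := (p+3)∫₀¹ sqrt((p-1)/(p+1) - s² + (2/(p+1))s^{p+1}) ds. Suppose λ(α) and d = d(α) satisfy λ(α) = d^{(p-1)²/(p-3)} (a₁ D(d) + a₂)^{(p-1)/(p-3)} (1 + C₁ d^{-(p-1)/2} + O(d^{-(p-1)})) and d = α^{(p-3)/(p-1)} (a₁ D(d) + a₂)^{-1/(p-1)} with D(d) = 1 + O(d^{-(p-1)/2}), D(d) → 1 as d → ∞, and d(α) → ∞ as α → ∞. Then λ(α) = α^{p-1} { 1 + C₁ (a₁ + a₂)^{1/2} α^{-(p-3)/2} + O(α^{-(p-3)}) } as α → ∞. -/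
open Filter Asymptotics

set_option maxHeartbeats 1000000

/-- Theorem 1.1: for p > 3, λ(α) = α^{p-1}{1 + C₁(a₁+a₂)^{1/2} α^{-(p-3)/2}
    + O(α^{-(p-3)})} as α → ∞. -/
theorem stmt_15 (p q a₁ a₂ : ℝ) (hp : 3 < p) (hq : 1 < q)
    (ha₁ : 0 ≤ a₁) (ha₂ : 0 ≤ a₂) (ha : 0 < a₁ + a₂)
    (C₁ : ℝ)
    (hC₁ : C₁ = (p+3) * ∫ s in (0:ℝ)..1,
        Real.sqrt ((p-1)/(p+1) - s ^ 2 + (2/(p+1)) * s ^ (p+1)))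
    (lam d D : ℝ → ℝ)
    (hdpos : ∀ᶠ α in atTop, 0 < d α)
    (E : ℝ → ℝ) (hE : E =O[atTop] (fun t => t ^ (-(p-1))))
    (hlam : ∀ᶠ α in atTop, lam α
      = (d α) ^ ((p-1) ^ 2 / (p-3)) * (a₁ * D (d α) + a₂) ^ ((p-1)/(p-3))
        * (1 + C₁ * (d α) ^ (-(p-1)/2) + E (d α)))
    (hd : ∀ᶠ α in atTop,
      d α = α ^ ((p-3)/(p-1)) * (a₁ * D (d α) + a₂) ^ (-(1:ℝ)/(p-1)))
    (hD : (fun t => D t - 1) =O[atTop] (fun t => t ^ (-(p-1)/2)))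
    (hDlim : Tendsto D atTop (nhds 1))
    (hdlim : Tendsto d atTop atTop) :
    (fun α => lam α
        - α ^ (p-1) * (1 + C₁ * Real.sqrt (a₁ + a₂) * α ^ (-(p-3)/2)))
      =O[atTop] (fun α => α ^ (p-1) * α ^ (-(p-3))) := by
  have hp3 : (0:ℝ) < p - 3 := by linarith
  have hp1 : (0:ℝ) < p - 1 := by linarith
  set S := a₁ + a₂ with hS
  have hSpos : 0 < S := ha
  obtain ⟨cE, hcE⟩ := hE.bound
  obtain ⟨cD, hcD⟩ := hD.bound
  rw [isBigO_iff]
  refine ⟨|C₁| * (a₁ * cD * Real.sqrt (2*S) / Real.sqrt S) + cE * (2*S), ?_⟩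
  have hA : ∀ᶠ α in atTop, a₁ * D (d α) + a₂ ∈ Set.Ioo (S/2) (2*S) := by
    have hDA : Tendsto (fun α => a₁ * D (d α) + a₂) atTop (nhds S) := by
      have h := (((hDlim.comp hdlim).const_mul a₁).add_const a₂)
      simpa [hS] using h
    exact hDA (Ioo_mem_nhds (by linarith) (by linarith))
  filter_upwards [hdpos, hlam, hd, hA, hdlim.eventually hcE, hdlim.eventually hcD,
    eventually_gt_atTop (0:ℝ)] with α hdp hl hdd hAio hEb hDb hαp
  set A := a₁ * D (d α) + a₂ with hAdef
  have hApos : 0 < A := lt_trans (by positivity) hAio.1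
  -- generic splitting of powers of d α
  have hid : ∀ r : ℝ, (d α) ^ r
      = α ^ (((p-3)/(p-1)) * r) * A ^ ((-(1:ℝ)/(p-1)) * r) := by
    intro r
    rw [hdd, Real.mul_rpow (Real.rpow_nonneg hαp.le _) (Real.rpow_nonneg hApos.le _),
      ← Real.rpow_mul hαp.le, ← Real.rpow_mul hApos.le]
  have e1 : ((p-3)/(p-1)) * ((p-1)^2/(p-3)) = p - 1 := by field_simp
  have e2 : (-(1:ℝ)/(p-1)) * ((p-1)^2/(p-3)) = -((p-1)/(p-3)) := by field_simp
  have e3 : ((p-3)/(p-1)) * (-(p-1)/2) = -(p-3)/2 := by field_simp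
  have e4 : (-(1:ℝ)/(p-1)) * (-(p-1)/2) = 1/2 := by field_simp
  have e5 : ((p-3)/(p-1)) * (-(p-1)) = -(p-3) := by field_simp
  have e6 : (-(1:ℝ)/(p-1)) * (-(p-1)) = 1 := by field_simp
  have hA0 : A ^ (-((p-1)/(p-3))) * A ^ ((p-1)/(p-3)) = 1 := by
    rw [← Real.rpow_add hApos, neg_add_cancel, Real.rpow_zero]
  have key : lam α = α ^ (p-1)
      * (1 + C₁ * (α ^ (-(p-3)/2) * Real.sqrt A) + E (d α)) := by
    rw [hl, hid ((p-1)^2/(p-3)), hid (-(p-1)/2), e1, e2, e3, e4,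
      mul_assoc (α ^ (p-1)), hA0, mul_one, Real.sqrt_eq_rpow]
  have hd3 : (d α) ^ (-(p-1)) = α ^ (-(p-3)) * A := by
    rw [hid (-(p-1)), e5, e6, Real.rpow_one]
  have hd2 : (d α) ^ (-(p-1)/2) = α ^ (-(p-3)/2) * Real.sqrt A := by
    rw [hid (-(p-1)/2), e3, e4, Real.sqrt_eq_rpow]
  set t := α ^ (-(p-3)/2) with ht
  have htpos : 0 < t := Real.rpow_pos_of_pos hαp _
  have htt : t * t = α ^ (-(p-3)) := by
    rw [ht, ← Real.rpow_add hαp]; congr 1; ring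
  have hdP : 0 < (d α) ^ (-(p-1)/2) := Real.rpow_pos_of_pos hdp _
  have hdP' : 0 < (d α) ^ (-(p-1)) := Real.rpow_pos_of_pos hdp _
  have hnD : ‖(d α) ^ (-(p-1)/2)‖ = (d α) ^ (-(p-1)/2) := by
    rw [Real.norm_eq_abs, abs_of_pos hdP]
  have hnD' : ‖(d α) ^ (-(p-1))‖ = (d α) ^ (-(p-1)) := by
    rw [Real.norm_eq_abs, abs_of_pos hdP']
  rw [hnD] at hDb; rw [hnD'] at hEb
  have hcD0 : 0 ≤ cD := by
    have h0 : (0:ℝ) ≤ cD * ((d α) ^ (-(p-1)/2)) := le_trans (norm_nonneg _) hDb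
    exact (mul_nonneg_iff_of_pos_right hdP).mp h0
  have hcE0 : 0 ≤ cE := by
    have h0 : (0:ℝ) ≤ cE * ((d α) ^ (-(p-1))) := le_trans (norm_nonneg _) hEb
    exact (mul_nonneg_iff_of_pos_right hdP').mp h0
  -- sqrt bounds
  have hsA : Real.sqrt A ≤ Real.sqrt (2*S) := Real.sqrt_le_sqrt hAio.2.le
  have hsS : 0 < Real.sqrt S := Real.sqrt_pos.mpr hSpos
  have hmul : (Real.sqrt A - Real.sqrt S) * (Real.sqrt A + Real.sqrt S) = A - S := by
    have h1 : Real.sqrt A * Real.sqrt A = A := Real.mul_self_sqrt hApos.le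
    have h2 : Real.sqrt S * Real.sqrt S = S := Real.mul_self_sqrt hSpos.le
    linear_combination h1 - h2
  have habs : |Real.sqrt A - Real.sqrt S| * (Real.sqrt A + Real.sqrt S) = |A - S| := by
    rw [← abs_of_nonneg (add_nonneg (Real.sqrt_nonneg A) (Real.sqrt_nonneg S)),
      ← abs_mul, hmul]
  have hsub : |Real.sqrt A - Real.sqrt S| * Real.sqrt S ≤ |A - S| := by
    calc |Real.sqrt A - Real.sqrt S| * Real.sqrt S
        ≤ |Real.sqrt A - Real.sqrt S| * (Real.sqrt A + Real.sqrt S) := by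
          apply mul_le_mul_of_nonneg_left _ (abs_nonneg _)
          linarith [Real.sqrt_nonneg A]
      _ = |A - S| := habs
  -- |A - S| bound
  have hAS : A - S = a₁ * (D (d α) - 1) := by rw [hAdef, hS]; ring
  have hD1 : |D (d α) - 1| ≤ cD * (t * Real.sqrt A) := by
    rw [← hd2]
    simpa [Real.norm_eq_abs] using hDb
  have hASb : |A - S| ≤ a₁ * cD * (t * Real.sqrt (2*S)) := by
    rw [hAS, abs_mul, abs_of_nonneg ha₁]
    calc a₁ * |D (d α) - 1| ≤ a₁ * (cD * (t * Real.sqrt A)) :=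
          mul_le_mul_of_nonneg_left hD1 ha₁
      _ ≤ a₁ * cD * (t * Real.sqrt (2*S)) := by
          have h := mul_le_mul_of_nonneg_left hsA
            (mul_nonneg (mul_nonneg ha₁ hcD0) htpos.le)
          calc a₁ * (cD * (t * Real.sqrt A)) = a₁ * cD * t * Real.sqrt A := by ring
            _ ≤ a₁ * cD * t * Real.sqrt (2*S) := h
            _ = a₁ * cD * (t * Real.sqrt (2*S)) := by ring
  have hsqb : |Real.sqrt A - Real.sqrt S| ≤ a₁ * cD * (t * Real.sqrt (2*S)) / Real.sqrt S := by
    rw [le_div_iff₀ hsS]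
    exact le_trans hsub hASb
  -- E bound
  have hEb' : |E (d α)| ≤ cE * (2*S) * α ^ (-(p-3)) := by
    have h1 : |E (d α)| ≤ cE * ((d α) ^ (-(p-1))) := by
      simpa [Real.norm_eq_abs] using hEb
    rw [hd3] at h1
    have h2 : cE * (α ^ (-(p-3)) * A) ≤ cE * (2*S) * α ^ (-(p-3)) := by
      have hα3 : (0:ℝ) < α ^ (-(p-3)) := Real.rpow_pos_of_pos hαp _
      have h := mul_le_mul_of_nonneg_left hAio.2.le (mul_nonneg hcE0 hα3.le)
      calc cE * (α ^ (-(p-3)) * A) = cE * α ^ (-(p-3)) * A := by ring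
        _ ≤ cE * α ^ (-(p-3)) * (2*S) := h
        _ = cE * (2*S) * α ^ (-(p-3)) := by ring
    linarith
  -- final computation
  have hdiff : lam α - α ^ (p-1) * (1 + C₁ * Real.sqrt S * α ^ (-(p-3)/2))
      = α ^ (p-1) * (C₁ * t * (Real.sqrt A - Real.sqrt S) + E (d α)) := by
    rw [key, ← ht]; ring
  rw [hdiff]
  have hαP : 0 < α ^ (p-1) := Real.rpow_pos_of_pos hαp _
  have hα3 : 0 < α ^ (-(p-3)) := Real.rpow_pos_of_pos hαp _
  rw [Real.norm_eq_abs, Real.norm_eq_abs, abs_mul, abs_of_pos hαP,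
    abs_mul, abs_of_pos hαP, abs_of_pos hα3]
  rw [mul_comm (α ^ (p-1)) (α ^ (-(p-3))), ← mul_assoc, mul_comm _ (α ^ (p-1)), mul_assoc]
  apply mul_le_mul_of_nonneg_left _ hαP.le
  rw [← mul_assoc C₁ t]
  calc |C₁ * t * (Real.sqrt A - Real.sqrt S) + E (d α)|
      ≤ |C₁ * t * (Real.sqrt A - Real.sqrt S)| + |E (d α)| := abs_add_le _ _
    _ ≤ |C₁| * t * |Real.sqrt A - Real.sqrt S| + cE * (2*S) * α ^ (-(p-3)) := by
        rw [abs_mul, abs_mul, abs_of_pos htpos]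
        exact add_le_add le_rfl hEb'
    _ ≤ |C₁| * t * (a₁ * cD * (t * Real.sqrt (2*S)) / Real.sqrt S)
        + cE * (2*S) * α ^ (-(p-3)) := by
        have h := mul_le_mul_of_nonneg_left hsqb (by positivity : (0:ℝ) ≤ |C₁| * t)
        linarith
    _ = (|C₁| * (a₁ * cD * Real.sqrt (2*S) / Real.sqrt S) + cE * (2*S)) * α ^ (-(p-3)) := by
        rw [← htt]; field_simp
end
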